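/- arXiv:2112.13902 — 4 statements merged into one kernel-verified Lean document; each statement's English description precedes it below -/
import Mathlib

section
/- There exists a universal constant C > 0 such that for every n ≥ 1, d ≥ 1, every polynomial P of degree at most d on {-1,1}^n with E|P(X)|^2 = 1 (X uniform on {-1,1}^n), and every non-empty subset A ⊆ {-1,1}^n with relative size ε = #A / 2^n, one has (1/#A) · Σ_{x∈A} |P(x)|^2 ≤ C^d · max{1, (|log ε| / d)^d}. -/
open Classical

/-- Expectation with respect to the uniform measure on the discrete cube `{-1,1}^n`,
encoded as `Fin n → Bool` (`true ↦ 1`, `false ↦ -1`). -/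
noncomputable def cubeE (n : ℕ) (f : (Fin n → Bool) → ℝ) : ℝ :=
  (∑ x : Fin n → Bool, f x) / 2 ^ n

/-- The real value of a coordinate of the cube: `true ↦ 1`, `false ↦ -1`. -/
def cubeSign (b : Bool) : ℝ := if b then 1 else -1

/-- `P` is (the restriction to the cube of) a multilinear polynomial of degree at most `d`:
`P x = ∑_{#S ≤ d} a_S ∏_{i ∈ S} x_i`. -/
def IsPolyDeg (n d : ℕ) (P : (Fin n → Bool) → ℝ) : Prop :=
  ∃ a : Finset (Fin n) → ℝ,
    (∀ S : Finset (Fin n), d < S.card → a S = 0) ∧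
    ∀ x, P x = ∑ S : Finset (Fin n), a S * ∏ i ∈ S, cubeSign (x i)

/-- Probability (uniform measure) of a set of points of the cube. -/
noncomputable def cubePr (n : ℕ) (A : Set (Fin n → Bool)) : ℝ :=
  (∑ x : Fin n → Bool, if x ∈ A then (1 : ℝ) else 0) / 2 ^ n

/-- `a` is an `e^{-r}`-quantile of `P(X)`:
`ℙ(P(X) ≥ a) ≥ e^{-r}` and `ℙ(P(X) ≤ a) ≥ 1 - e^{-r}`. -/
def IsQuantile (n : ℕ) (P : (Fin n → Bool) → ℝ) (r a : ℝ) : Prop :=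
  Real.exp (-r) ≤ cubePr n {x | a ≤ P x} ∧ 1 - Real.exp (-r) ≤ cubePr n {x | P x ≤ a}

/-- Discrete partial derivative: `∂_i f(x) = (f(T_i^1 x) - f(T_i^{-1} x))/2`. -/
noncomputable def discDeriv (n : ℕ) (f : (Fin n → Bool) → ℝ) (i : Fin n)
    (x : Fin n → Bool) : ℝ :=
  (f (Function.update x i true) - f (Function.update x i false)) / 2

/-- Squared norm of the discrete gradient: `|∇f(x)|² = ∑_i |∂_i f(x)|²`. -/
noncomputable def gradSq (n : ℕ) (f : (Fin n → Bool) → ℝ) (x : Fin n → Bool) : ℝ :=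
  ∑ i : Fin n, (discDeriv n f i x) ^ 2

open Finset Function

private def oddProd (m : ℕ) : ℕ := ∏ j ∈ Finset.range m, (2*j+1)

lemma oddProd_pos (m : ℕ) : 0 < oddProd m :=
  Finset.prod_pos (fun j _ => by omega)

lemma factorial_two_mul' (m : ℕ) : (2*m).factorial = 2^m * m.factorial * oddProd m := by
  induction m with
  | zero => simp [oddProd]
  | succ m ih =>
    have h1 : 2*(m+1) = (2*m+1)+1 := by ring
    rw [h1, Nat.factorial_succ, show 2*m+1 = (2*m)+1 from rfl, Nat.factorial_succ, ih,
      show oddProd (m+1) = oddProd m * (2*m+1) from Finset.prod_range_succ _ _,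
      Nat.factorial_succ]
    ring

lemma oddProd_split (i j : ℕ) :
    oddProd (i+j) ≤ (2*(i+j)-1)^j * (oddProd i * oddProd j) := by
  have h : oddProd (i+j) = oddProd i * ∏ t ∈ Finset.range j, (2*(i+t)+1) := by
    rw [oddProd, Finset.prod_range_add]; rfl
  have h2 : (∏ t ∈ Finset.range j, (2*(i+t)+1)) ≤ (2*(i+j)-1)^j := by
    calc (∏ t ∈ Finset.range j, (2*(i+t)+1)) ≤ ∏ t ∈ Finset.range j, (2*(i+j)-1) :=
        Finset.prod_le_prod' (fun t ht => by
          have := Finset.mem_range.mp ht; omega)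
      _ = (2*(i+j)-1)^j := by rw [Finset.prod_const, Finset.card_range]
  calc oddProd (i+j) = oddProd i * ∏ t ∈ Finset.range j, (2*(i+t)+1) := h
    _ ≤ oddProd i * (2*(i+j)-1)^j := Nat.mul_le_mul_left _ h2
    _ ≤ (2*(i+j)-1)^j * (oddProd i * oddProd j) := by
        have := oddProd_pos j
        calc oddProd i * (2*(i+j)-1)^j ≤ (oddProd i * (2*(i+j)-1)^j) * oddProd j :=
            Nat.le_mul_of_pos_right _ this
          _ = (2*(i+j)-1)^j * (oddProd i * oddProd j) := by ring

lemma choose_ineq (i j : ℕ) :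
    Nat.choose (2*(i+j)) (2*i) ≤ (2*(i+j)-1)^j * Nat.choose (i+j) i := by
  have hij : i ≤ i + j := Nat.le_add_right i j
  have h2 : 2*i ≤ 2*(i+j) := by omega
  have key : Nat.choose (2*(i+j)) (2*i) * ((2*i).factorial * (2*(i+j)-2*i).factorial)
      ≤ ((2*(i+j)-1)^j * Nat.choose (i+j) i) * ((2*i).factorial * (2*(i+j)-2*i).factorial) := by
    have e1 : Nat.choose (2*(i+j)) (2*i) * ((2*i).factorial * (2*(i+j)-2*i).factorial)
        = (2*(i+j)).factorial := by
      rw [← Nat.choose_mul_factorial_mul_factorial h2]; ring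
    have esub : 2*(i+j)-2*i = 2*j := by omega
    have e2 : ((2*(i+j)-1)^j * Nat.choose (i+j) i) * ((2*i).factorial * (2*(i+j)-2*i).factorial)
        = 2^(i+j) * (i+j).factorial * ((2*(i+j)-1)^j * (oddProd i * oddProd j)) := by
      rw [esub, factorial_two_mul' i, factorial_two_mul' j]
      have e3 : (i+j).factorial = Nat.choose (i+j) i * i.factorial * (i+j-i).factorial :=
        (Nat.choose_mul_factorial_mul_factorial hij).symm
      rw [e3, show i+j-i = j from by omega, pow_add]
      ring
    rw [e1, e2, factorial_two_mul' (i+j)]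
    exact Nat.mul_le_mul_left _ (oddProd_split i j)
  have hpos : 0 < (2*i).factorial * (2*(i+j)-2*i).factorial :=
    Nat.mul_pos (Nat.factorial_pos _) (Nat.factorial_pos _)
  exact Nat.le_of_mul_le_mul_right key hpos

lemma sum_range_even_odd (m : ℕ) (F : ℕ → ℝ) :
    ∑ j ∈ Finset.range (2*m+1), F j
      = ∑ i ∈ Finset.range (m+1), F (2*i) + ∑ i ∈ Finset.range m, F (2*i+1) := by
  induction m with
  | zero => simp
  | succ m ih =>
    have h1 : 2*(m+1)+1 = (2*m+1)+1+1 := by ring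
    rw [h1, Finset.sum_range_succ, Finset.sum_range_succ, ih,
      Finset.sum_range_succ (fun i => F (2*i)) (m+1), Finset.sum_range_succ (fun i => F (2*i+1)) m,
      Finset.sum_range_succ (fun i => F (2*i)) m,
      show 2*(m+1) = 2*m+2 from by ring]
    ring

lemma two_point {k : ℕ} (hk : 1 ≤ k) (a b : ℝ) :
    (a+b)^(2*k) + (a-b)^(2*k) ≤ 2 * (a^2 + (2*(k:ℝ)-1)*b^2)^k := by
  set c : ℝ := 2*(k:ℝ)-1 with hc
  have hc1 : (1:ℝ) ≤ c := by
    have : (1:ℝ) ≤ (k:ℝ) := by exact_mod_cast hk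
    simp [hc]; linarith
  have hc0 : (0:ℝ) ≤ c := by linarith
  have hcast : ∀ i : ℕ, i ≤ k → ((2*k-1:ℕ):ℝ) = c := by
    intro i hi
    have : 1 ≤ 2*k := by omega
    push_cast [Nat.cast_sub this]
    ring
  -- expand LHS
  have hL : (a+b)^(2*k) + (a-b)^(2*k)
      = ∑ i ∈ Finset.range (k+1), 2 * ((2*k).choose (2*i) : ℝ) * (a^2)^i * (b^2)^(k-i) := by
    have e1 : (a+b)^(2*k) = ∑ j ∈ Finset.range (2*k+1), a^j * b^(2*k-j) * ((2*k).choose j : ℝ) :=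
      add_pow a b (2*k)
    have e2 : (a-b)^(2*k) = ∑ j ∈ Finset.range (2*k+1), a^j * (-b)^(2*k-j) * ((2*k).choose j : ℝ) := by
      rw [sub_eq_add_neg]; exact add_pow a (-b) (2*k)
    rw [e1, e2, ← Finset.sum_add_distrib,
      sum_range_even_odd k (fun j => a^j * b^(2*k-j) * ((2*k).choose j : ℝ)
        + a^j * (-b)^(2*k-j) * ((2*k).choose j : ℝ))]
    have hodd : ∀ i ∈ Finset.range k,
        (a^(2*i+1) * b^(2*k-(2*i+1)) * ((2*k).choose (2*i+1) : ℝ)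
          + a^(2*i+1) * (-b)^(2*k-(2*i+1)) * ((2*k).choose (2*i+1) : ℝ)) = 0 := by
      intro i hi
      have hi' : i < k := Finset.mem_range.mp hi
      have hoddexp : Odd (2*k-(2*i+1)) := ⟨k-i-1, by omega⟩
      rw [hoddexp.neg_pow]; ring
    rw [Finset.sum_eq_zero hodd, add_zero]
    apply Finset.sum_congr rfl
    intro i hi
    have hi' : i ≤ k := by have := Finset.mem_range.mp hi; omega
    have hexp : 2*k-2*i = 2*(k-i) := by omega
    have hneg : (-b)^(2*k-2*i) = b^(2*k-2*i) := by
      rw [hexp, pow_mul, pow_mul, neg_pow_two]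
    rw [hneg, hexp, pow_mul, pow_mul]
    ring
  -- expand RHS
  have hR : (a^2 + c*b^2)^k
      = ∑ i ∈ Finset.range (k+1), (a^2)^i * c^(k-i) * (b^2)^(k-i) * ((k).choose i : ℝ) := by
    rw [add_pow]
    apply Finset.sum_congr rfl; intro i _; rw [mul_pow]; ring
  rw [hL, hR, Finset.mul_sum]
  apply Finset.sum_le_sum
  intro i hi
  have hi' : i ≤ k := by have := Finset.mem_range.mp hi; omega
  have hab : (0:ℝ) ≤ (a^2)^i * (b^2)^(k-i) := by positivity
  have hchoose : ((2*k).choose (2*i) : ℝ) ≤ c^(k-i) * (k.choose i : ℝ) := by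
    have hn := choose_ineq i (k-i)
    rw [show i + (k-i) = k from by omega] at hn
    have := hcast i hi'
    calc ((2*k).choose (2*i) : ℝ) ≤ (((2*k-1)^(k-i) * k.choose i : ℕ) : ℝ) := by exact_mod_cast hn
      _ = c^(k-i) * (k.choose i : ℝ) := by push_cast [this]; ring
  calc 2 * ((2*k).choose (2*i) : ℝ) * (a^2)^i * (b^2)^(k-i)
      = ((2*k).choose (2*i) : ℝ) * (2 * ((a^2)^i * (b^2)^(k-i))) := by ring
    _ ≤ (c^(k-i) * (k.choose i : ℝ)) * (2 * ((a^2)^i * (b^2)^(k-i))) := by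
        apply mul_le_mul_of_nonneg_right hchoose; positivity
    _ = 2 * ((a^2)^i * c^(k-i) * (b^2)^(k-i) * (k.choose i : ℝ)) := by ring

noncomputable def polyF (n : ℕ) (a : Finset (Fin n) → ℝ) (x : Fin n → Bool) : ℝ :=
  ∑ S : Finset (Fin n), a S * ∏ i ∈ S, cubeSign (x i)

lemma sum_update (n : ℕ) (i : Fin n) (f : (Fin n → Bool) → ℝ) :
    ∑ x : Fin n → Bool, (f (update x i true) + f (update x i false))
      = 2 * ∑ x : Fin n → Bool, f x := by
  have hinv : Function.Involutive (fun x : Fin n → Bool => update x i (!(x i))) := by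
    intro x; funext j
    by_cases hj : j = i
    · subst hj; simp
    · simp [Function.update_of_ne hj]
  have e1 : ∀ x : Fin n → Bool,
      f (update x i true) + f (update x i false) = f x + f (update x i (!(x i))) := by
    intro x
    cases hxi : x i with
    | true =>
      have h1 : update x i true = x := by rw [← hxi]; exact Function.update_eq_self i x
      simp only [Bool.not_true, h1]
    | false =>
      have h1 : update x i false = x := by rw [← hxi]; exact Function.update_eq_self i x
      simp only [Bool.not_false, h1, add_comm]
  calc ∑ x : Fin n → Bool, (f (update x i true) + f (update x i false))
      = ∑ x : Fin n → Bool, (f x + f (update x i (!(x i)))) :=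
        Finset.sum_congr rfl (fun x _ => e1 x)
    _ = (∑ x : Fin n → Bool, f x) + ∑ x : Fin n → Bool, f (update x i (!(x i))) :=
        Finset.sum_add_distrib
    _ = 2 * ∑ x : Fin n → Bool, f x := by
        rw [hinv.bijective.sum_comp f]; ring

section decomp
variable {n : ℕ} (i : Fin n) (a : Finset (Fin n) → ℝ)

noncomputable def gCoef : Finset (Fin n) → ℝ := fun S => if i ∈ S then 0 else a S
noncomputable def hCoef : Finset (Fin n) → ℝ := fun S => if i ∈ S then 0 else a (insert i S)

lemma poly_indep (c : Finset (Fin n) → ℝ) (hc : ∀ S, i ∈ S → c S = 0)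
    (x : Fin n → Bool) (b : Bool) : polyF n c (update x i b) = polyF n c x := by
  apply Finset.sum_congr rfl
  intro S _
  by_cases hiS : i ∈ S
  · rw [hc S hiS]; ring
  · congr 1
    apply Finset.prod_congr rfl
    intro j hj
    have : j ≠ i := fun h => hiS (h ▸ hj)
    rw [Function.update_of_ne this]

lemma poly_decomp (x : Fin n → Bool) :
    polyF n a x = polyF n (gCoef i a) x + cubeSign (x i) * polyF n (hCoef i a) x := by
  have hsplit : polyF n a x
      = (∑ S ∈ Finset.univ.filter (fun S : Finset (Fin n) => i ∈ S), a S * ∏ j ∈ S, cubeSign (x j))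
        + ∑ S ∈ Finset.univ.filter (fun S : Finset (Fin n) => ¬ i ∈ S), a S * ∏ j ∈ S, cubeSign (x j) :=
    (Finset.sum_filter_add_sum_filter_not Finset.univ (fun S => i ∈ S) _).symm
  have hg : polyF n (gCoef i a) x
      = ∑ S ∈ Finset.univ.filter (fun S : Finset (Fin n) => ¬ i ∈ S), a S * ∏ j ∈ S, cubeSign (x j) := by
    rw [Finset.sum_filter, polyF]
    apply Finset.sum_congr rfl
    intro S _
    by_cases hiS : i ∈ S <;> simp [gCoef, hiS]
  have hh : (∑ S ∈ Finset.univ.filter (fun S : Finset (Fin n) => i ∈ S), a S * ∏ j ∈ S, cubeSign (x j))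
      = cubeSign (x i) * polyF n (hCoef i a) x := by
    rw [polyF, Finset.mul_sum]
    have hRHS : ∑ S : Finset (Fin n), cubeSign (x i) * (hCoef i a S * ∏ j ∈ S, cubeSign (x j))
        = ∑ S ∈ Finset.univ.filter (fun S : Finset (Fin n) => ¬ i ∈ S),
            cubeSign (x i) * (a (insert i S) * ∏ j ∈ S, cubeSign (x j)) := by
      calc ∑ S : Finset (Fin n), cubeSign (x i) * (hCoef i a S * ∏ j ∈ S, cubeSign (x j))
          = ∑ S ∈ Finset.univ.filter (fun S : Finset (Fin n) => ¬ i ∈ S),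
              cubeSign (x i) * (hCoef i a S * ∏ j ∈ S, cubeSign (x j)) := by
            refine (Finset.sum_subset (Finset.filter_subset _ _) ?_).symm
            intro S _ hS
            simp only [Finset.mem_filter, Finset.mem_univ, true_and, not_not] at hS
            simp [hCoef, hS]
        _ = ∑ S ∈ Finset.univ.filter (fun S : Finset (Fin n) => ¬ i ∈ S),
              cubeSign (x i) * (a (insert i S) * ∏ j ∈ S, cubeSign (x j)) := by
            apply Finset.sum_congr rfl
            intro S hS
            simp only [Finset.mem_filter, Finset.mem_univ, true_and] at hS
            simp [hCoef, hS]
    rw [hRHS]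
    apply Finset.sum_nbij' (fun S => S.erase i) (fun S => insert i S)
    · intro S hS
      simp [Finset.mem_filter, Finset.notMem_erase]
    · intro S hS
      simp only [Finset.mem_filter, Finset.mem_univ, true_and] at hS ⊢
      exact Finset.mem_insert_self i S
    · intro S hS
      exact Finset.insert_erase (Finset.mem_filter.mp hS).2
    · intro S hS
      simp only [Finset.mem_filter, Finset.mem_univ, true_and] at hS
      exact Finset.erase_insert hS
    · intro S hS
      have hiS : i ∈ S := (Finset.mem_filter.mp hS).2
      rw [Finset.insert_erase hiS, ← Finset.mul_prod_erase S _ hiS]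
      ring
  rw [hsplit, hg, hh]
  ring
end decomp

lemma mink {ι : Type*} [Fintype ι] (k : ℕ) (hk : 1 ≤ k) (W : ℝ) (hW : 0 < W)
    (u v : ι → ℝ) (hu : ∀ x, 0 ≤ u x) (hv : ∀ x, 0 ≤ v x)
    (A B : ℝ) (hA : 0 ≤ A) (hB : 0 ≤ B)
    (h1 : ∑ x, u x ^ k ≤ W * A ^ k) (h2 : ∑ x, v x ^ k ≤ W * B ^ k) :
    ∑ x, (u x + v x) ^ k ≤ W * (A + B) ^ k := by
  have hk0 : (k : ℝ) ≠ 0 := by positivity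
  have hkR : (1:ℝ) ≤ (k:ℝ) := by exact_mod_cast hk
  have key := Real.Lp_add_le_of_nonneg (s := Finset.univ) (f := u) (g := v) (p := (k:ℝ)) hkR
    (fun x _ => hu x) (fun x _ => hv x)
  -- convert rpow to pow in key
  have e1 : ∀ (w : ι → ℝ), (∑ x, w x ^ (k:ℝ)) = ∑ x, w x ^ k := by
    intro w; exact Finset.sum_congr rfl (fun x _ => Real.rpow_natCast _ k)
  rw [e1, e1, e1] at key
  have hsum_nonneg : ∀ (w : ι → ℝ), (∀ x, 0 ≤ w x) → 0 ≤ ∑ x, w x ^ k := by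
    intro w hw; exact Finset.sum_nonneg (fun x _ => pow_nonneg (hw x) k)
  have root_le : ∀ (S : ℝ) (C : ℝ), 0 ≤ S → 0 ≤ C → S ≤ W * C ^ k →
      S ^ (1/(k:ℝ)) ≤ W ^ (1/(k:ℝ)) * C := by
    intro S C hS hC h
    have h' : S ^ (1/(k:ℝ)) ≤ (W * C ^ k) ^ (1/(k:ℝ)) :=
      Real.rpow_le_rpow hS h (by positivity)
    calc S ^ (1/(k:ℝ)) ≤ (W * C ^ k) ^ (1/(k:ℝ)) := h'
      _ = W ^ (1/(k:ℝ)) * C := by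
          rw [Real.mul_rpow hW.le (by positivity), ← Real.rpow_natCast C k,
            ← Real.rpow_mul hC]
          rw [mul_one_div_cancel hk0, Real.rpow_one]
  have hu' := root_le _ _ (hsum_nonneg u hu) hA h1
  have hv' := root_le _ _ (hsum_nonneg v hv) hB h2
  have hsum : (∑ x, (u x + v x) ^ k) ^ (1/(k:ℝ)) ≤ W ^ (1/(k:ℝ)) * (A + B) := by
    calc (∑ x, (u x + v x) ^ k) ^ (1/(k:ℝ)) ≤ (∑ x, u x ^ k) ^ (1/(k:ℝ)) + (∑ x, v x ^ k) ^ (1/(k:ℝ)) := key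
      _ ≤ W ^ (1/(k:ℝ)) * A + W ^ (1/(k:ℝ)) * B := add_le_add hu' hv'
      _ = W ^ (1/(k:ℝ)) * (A + B) := by ring
  have hS0 : 0 ≤ ∑ x, (u x + v x) ^ k := hsum_nonneg _ (fun x => add_nonneg (hu x) (hv x))
  have final := Real.rpow_le_rpow (by positivity) hsum (le_of_lt (by positivity : (0:ℝ) < (k:ℝ)))
  calc (∑ x, (u x + v x) ^ k : ℝ) = ((∑ x, (u x + v x) ^ k) ^ (1/(k:ℝ))) ^ (k:ℝ) := by
        rw [← Real.rpow_mul (by positivity), one_div_mul_cancel hk0, Real.rpow_one]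
      _ ≤ (W ^ (1/(k:ℝ)) * (A + B)) ^ (k:ℝ) := final
      _ = W * (A + B) ^ k := by
          rw [Real.mul_rpow (by positivity) (by positivity), ← Real.rpow_mul hW.le,
            one_div_mul_cancel hk0, Real.rpow_one, Real.rpow_natCast]

lemma alg1 (c W E : ℝ) (k d' : ℕ) :
    c^k * (W * (c^d' * E)^k) = W * ((c^(d'+1)) * E)^k := by
  have h : (c^(d'+1) * E)^k = c^k * (c^d'*E)^k := by
    rw [pow_succ, mul_comm (c^d') c, mul_assoc, mul_pow]
  rw [h]; ring

lemma sum_const_cube (n : ℕ) (c : ℝ) : ∑ _x : Fin n → Bool, c = 2^n * c := by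
  rw [Finset.sum_const, Finset.card_univ]
  simp [Fintype.card_fun, nsmul_eq_mul]

lemma bonami {n : ℕ} (k : ℕ) (hk : 1 ≤ k) (T : Finset (Fin n)) :
    ∀ (d : ℕ) (a : Finset (Fin n) → ℝ),
      (∀ S, a S ≠ 0 → S ⊆ T) → (∀ S, d < S.card → a S = 0) →
      ∑ x : Fin n → Bool, (polyF n a x)^(2*k)
        ≤ (2:ℝ)^n * ((2*(k:ℝ)-1)^d * ((∑ x : Fin n → Bool, (polyF n a x)^2) / 2^n))^k := by
  have hW : (0:ℝ) < 2^n := by positivity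
  have hc1 : (1:ℝ) ≤ 2*(k:ℝ)-1 := by
    have : (1:ℝ) ≤ (k:ℝ) := by exact_mod_cast hk
    linarith
  have hc0 : (0:ℝ) ≤ 2*(k:ℝ)-1 := by linarith
  induction T using Finset.induction_on with
  | empty =>
    intro d a hsupp hdeg
    have hconst : ∀ x, polyF n a x = a ∅ := by
      intro x
      rw [polyF, Finset.sum_eq_single ∅]
      · simp
      · intro S _ hS
        have : a S = 0 := by
          by_contra h
          exact hS (Finset.subset_empty.mp (hsupp S h))
        rw [this, zero_mul]
      · intro h; exact absurd (Finset.mem_univ _) h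
    have e1 : ∑ x : Fin n → Bool, (polyF n a x)^(2*k) = 2^n * (a ∅)^(2*k) := by
      rw [Finset.sum_congr rfl (fun x _ => by rw [hconst x]), sum_const_cube]
    have e2 : ∑ x : Fin n → Bool, (polyF n a x)^2 = 2^n * (a ∅)^2 := by
      rw [Finset.sum_congr rfl (fun x _ => by rw [hconst x]), sum_const_cube]
    rw [e1, e2, mul_div_cancel_left₀ _ (ne_of_gt hW)]
    rw [mul_pow, pow_mul]
    have h1 : (1:ℝ) ≤ ((2*(k:ℝ)-1)^d)^k := one_le_pow₀ (one_le_pow₀ hc1)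
    have h2 : (0:ℝ) ≤ ((a ∅)^2)^k := by positivity
    nlinarith [mul_le_mul_of_nonneg_right h1 h2]
  | @insert i T hiT ih =>
    intro d a hsupp hdeg
    set G := polyF n (gCoef i a) with hG
    set H := polyF n (hCoef i a) with hH
    have hGind : ∀ (x : Fin n → Bool) (b : Bool), G (update x i b) = G x :=
      fun x b => poly_indep i _ (fun S hS => if_pos hS) x b
    have hHind : ∀ (x : Fin n → Bool) (b : Bool), H (update x i b) = H x :=
      fun x b => poly_indep i _ (fun S hS => if_pos hS) x b
    have hevalT : ∀ x : Fin n → Bool, polyF n a (update x i true) = G x + H x := by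
      intro x
      rw [poly_decomp i a, ← hG, ← hH, hGind, hHind, Function.update_self]
      simp [cubeSign]
    have hevalF : ∀ x : Fin n → Bool, polyF n a (update x i false) = G x - H x := by
      intro x
      rw [poly_decomp i a, ← hG, ← hH, hGind, hHind, Function.update_self]
      simp [cubeSign]; ring
    have hpar : ∑ x : Fin n → Bool, (polyF n a x)^2
        = (∑ x : Fin n → Bool, (G x)^2) + ∑ x : Fin n → Bool, (H x)^2 := by
      have h2 := sum_update n i (fun x => (polyF n a x)^2)
      have h3 : ∑ x : Fin n → Bool, ((polyF n a (update x i true))^2 + (polyF n a (update x i false))^2)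
          = ∑ x : Fin n → Bool, (2*(G x)^2 + 2*(H x)^2) := by
        apply Finset.sum_congr rfl
        intro x _
        rw [hevalT, hevalF]; ring
      rw [h3] at h2
      have h4 : ∑ x : Fin n → Bool, (2*(G x)^2 + 2*(H x)^2)
          = 2*((∑ x : Fin n → Bool, (G x)^2) + ∑ x : Fin n → Bool, (H x)^2) := by
        rw [Finset.sum_add_distrib, ← Finset.mul_sum, ← Finset.mul_sum]; ring
      rw [h4] at h2
      linarith
    have hmom : ∑ x : Fin n → Bool, (polyF n a x)^(2*k)
        ≤ ∑ x : Fin n → Bool, ((G x)^2 + (2*(k:ℝ)-1) * (H x)^2)^k := by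
      have h2 := sum_update n i (fun x => (polyF n a x)^(2*k))
      have h3 : ∑ x : Fin n → Bool, ((polyF n a (update x i true))^(2*k) + (polyF n a (update x i false))^(2*k))
          ≤ ∑ x : Fin n → Bool, 2 * ((G x)^2 + (2*(k:ℝ)-1) * (H x)^2)^k := by
        apply Finset.sum_le_sum
        intro x _
        rw [hevalT, hevalF]
        exact two_point hk (G x) (H x)
      rw [h2, ← Finset.mul_sum] at h3
      linarith
    cases d with
    | zero =>
      have hH0 : ∀ x, H x = 0 := by
        intro x
        apply Finset.sum_eq_zero
        intro S _
        have : hCoef i a S = 0 := by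
          by_cases hiS : i ∈ S
          · simp [hCoef, hiS]
          · simp only [hCoef, hiS, if_false]
            apply hdeg
            rw [Finset.card_insert_of_notMem hiS]; omega
        rw [this, zero_mul]
      have hFG : ∀ x, polyF n a x = G x := by
        intro x; rw [poly_decomp i a, ← hH, hH0 x]; ring
      have hgs : ∀ S, gCoef i a S ≠ 0 → S ⊆ T := by
        intro S h
        by_cases hiS : i ∈ S
        · exact absurd (if_pos hiS) h
        · have haS : a S ≠ 0 := by simpa [gCoef, hiS] using h
          exact (Finset.subset_insert_iff_of_notMem hiS).mp (hsupp S haS)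
      have hgd : ∀ S, 0 < S.card → gCoef i a S = 0 := by
        intro S h
        by_cases hiS : i ∈ S
        · exact if_pos hiS
        · simp only [gCoef, hiS, if_false]; exact hdeg S h
      have := ih 0 (gCoef i a) hgs hgd
      calc ∑ x : Fin n → Bool, (polyF n a x)^(2*k)
          = ∑ x : Fin n → Bool, (G x)^(2*k) :=
            Finset.sum_congr rfl (fun x _ => by rw [hFG x])
        _ ≤ (2:ℝ)^n * ((2*(k:ℝ)-1)^0 * ((∑ x : Fin n → Bool, (G x)^2) / 2^n))^k := this
        _ = (2:ℝ)^n * ((2*(k:ℝ)-1)^0 * ((∑ x : Fin n → Bool, (polyF n a x)^2) / 2^n))^k := by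
            rw [Finset.sum_congr rfl (fun x _ => by rw [hFG x] : ∀ x ∈ Finset.univ, (polyF n a x)^2 = (G x)^2)]
    | succ d' =>
      set c : ℝ := 2*(k:ℝ)-1 with hcdef
      clear_value c
      have hgs : ∀ S, gCoef i a S ≠ 0 → S ⊆ T := by
        intro S h
        by_cases hiS : i ∈ S
        · exact absurd (if_pos hiS) h
        · have haS : a S ≠ 0 := by simpa [gCoef, hiS] using h
          exact (Finset.subset_insert_iff_of_notMem hiS).mp (hsupp S haS)
      have hgd : ∀ S, d'+1 < S.card → gCoef i a S = 0 := by
        intro S h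
        by_cases hiS : i ∈ S
        · exact if_pos hiS
        · simp only [gCoef, hiS, if_false]; exact hdeg S h
      have hhs : ∀ S, hCoef i a S ≠ 0 → S ⊆ T := by
        intro S h
        by_cases hiS : i ∈ S
        · exact absurd (if_pos hiS) h
        · have haS : a (insert i S) ≠ 0 := by simpa [hCoef, hiS] using h
          have hsub := hsupp _ haS
          intro j hj
          have hj2 : j ∈ insert i T := hsub (Finset.mem_insert_of_mem hj)
          rcases Finset.mem_insert.mp hj2 with h1 | h1
          · exact absurd (h1 ▸ hj) hiS
          · exact h1
      have hhd : ∀ S, d' < S.card → hCoef i a S = 0 := by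
        intro S h
        by_cases hiS : i ∈ S
        · exact if_pos hiS
        · simp only [hCoef, hiS, if_false]
          apply hdeg
          rw [Finset.card_insert_of_notMem hiS]; omega
      have ihg := ih (d'+1) (gCoef i a) hgs hgd
      have ihh := ih d' (hCoef i a) hhs hhd
      rw [← hG] at ihg
      rw [← hH] at ihh
      have hsG : (0:ℝ) ≤ ∑ x : Fin n → Bool, (G x)^2 :=
        Finset.sum_nonneg (fun x _ => sq_nonneg _)
      have hsH : (0:ℝ) ≤ ∑ x : Fin n → Bool, (H x)^2 :=
        Finset.sum_nonneg (fun x _ => sq_nonneg _)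
      set A : ℝ := c^(d'+1) * ((∑ x : Fin n → Bool, (G x)^2) / 2^n) with hA
      set B : ℝ := c^(d'+1) * ((∑ x : Fin n → Bool, (H x)^2) / 2^n) with hB
      have hA0 : 0 ≤ A := by
        apply mul_nonneg (pow_nonneg hc0 _)
        positivity
      have hB0 : 0 ≤ B := by
        apply mul_nonneg (pow_nonneg hc0 _)
        positivity
      have h1 : ∑ x : Fin n → Bool, ((G x)^2) ^ k ≤ (2:ℝ)^n * A ^ k := by
        calc ∑ x : Fin n → Bool, ((G x)^2) ^ k = ∑ x : Fin n → Bool, (G x)^(2*k) :=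
            Finset.sum_congr rfl (fun x _ => (pow_mul (G x) 2 k).symm)
          _ ≤ (2:ℝ)^n * A ^ k := ihg
      have h2 : ∑ x : Fin n → Bool, (c * (H x)^2) ^ k ≤ (2:ℝ)^n * B ^ k := by
        have e : ∀ x : Fin n → Bool, (c * (H x)^2) ^ k = c^k * ((H x)^(2*k)) := by
          intro x; rw [mul_pow, pow_mul]
        rw [Finset.sum_congr rfl (fun x _ => e x), ← Finset.mul_sum]
        have := mul_le_mul_of_nonneg_left ihh (pow_nonneg hc0 k)
        calc c^k * ∑ x : Fin n → Bool, (H x)^(2*k)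
            ≤ c^k * ((2:ℝ)^n * (c^d' * ((∑ x : Fin n → Bool, (H x)^2) / 2^n))^k) := this
          _ = (2:ℝ)^n * B ^ k := by
              rw [hB]
              exact alg1 c ((2:ℝ)^n) ((∑ x : Fin n → Bool, (H x)^2) / 2^n) k d'
      have hmink := mink k hk ((2:ℝ)^n) hW (fun x => (G x)^2) (fun x => c * (H x)^2)
        (fun x => sq_nonneg _) (fun x => mul_nonneg hc0 (sq_nonneg _)) A B hA0 hB0 h1 h2
      calc ∑ x : Fin n → Bool, (polyF n a x)^(2*k)
          ≤ ∑ x : Fin n → Bool, ((G x)^2 + c * (H x)^2)^k := hmom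
        _ ≤ (2:ℝ)^n * (A + B) ^ k := hmink
        _ = (2:ℝ)^n * (c^(d'+1) * ((∑ x : Fin n → Bool, (polyF n a x)^2) / 2^n))^k := by
            rw [hpar,
              show A + B = c^(d'+1) * (((∑ x : Fin n → Bool, (G x)^2) + ∑ x : Fin n → Bool, (H x)^2)/2^n)
                from by rw [hA, hB]; ring]

/-- Restricted second-moment bound: for `A ⊆ {-1,1}^n` of relative size `ε`,
`(1/#A) ∑_{x ∈ A} |P(x)|² ≤ C^d max{1, (|log ε|/d)^d}` when `E|P(X)|² = 1`. -/
theorem restricted_second_moment :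
    ∃ C : ℝ, 0 < C ∧
      ∀ (n d : ℕ), 1 ≤ n → 1 ≤ d →
        ∀ P : (Fin n → Bool) → ℝ, IsPolyDeg n d P →
          cubeE n (fun x => (P x) ^ 2) = 1 →
            ∀ A : Finset (Fin n → Bool), A.Nonempty →
              (∑ x ∈ A, (P x) ^ 2) / (A.card : ℝ) ≤
                C ^ d *
                  max 1 ((|Real.log ((A.card : ℝ) / 2 ^ n)| / (d : ℝ)) ^ d) := by
  refine ⟨20, by norm_num, ?_⟩
  intro n d hn hd P hpoly hE2 A hA
  obtain ⟨a, hdeg, hPeq⟩ := hpoly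
  have hP : ∀ x, P x = polyF n a x := hPeq
  have hW : (0:ℝ) < 2^n := by positivity
  -- second moment
  have hsum2 : ∑ x : Fin n → Bool, (P x)^2 = 2^n := by
    have := hE2
    rw [cubeE, div_eq_one_iff_eq (ne_of_gt hW)] at this
    exact this
  -- epsilon
  have hN0 : 0 < A.card := Finset.card_pos.mpr hA
  have hNR : (0:ℝ) < (A.card : ℝ) := by exact_mod_cast hN0
  have hNle : (A.card : ℝ) ≤ 2^n := by
    have h1 : A.card ≤ Fintype.card (Fin n → Bool) := Finset.card_le_univ A
    have h2 : Fintype.card (Fin n → Bool) = 2^n := by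
      simp [Fintype.card_fun]
    rw [h2] at h1
    exact_mod_cast h1
  set ε : ℝ := (A.card : ℝ) / 2^n with hεdef
  have hε0 : 0 < ε := div_pos hNR hW
  have hε1 : ε ≤ 1 := by
    rw [hεdef, div_le_one hW]; exact hNle
  set t : ℝ := |Real.log ε| with htdef
  have hlogε : Real.log ε ≤ 0 := Real.log_nonpos (le_of_lt hε0) hε1
  have ht : t = - Real.log ε := abs_of_nonpos hlogε
  have ht0 : 0 ≤ t := abs_nonneg _
  have hdR : (0:ℝ) < (d:ℝ) := by exact_mod_cast hd
  have hexp : Real.exp t = 1/ε := by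
    rw [ht, Real.exp_neg, Real.exp_log hε0, one_div]
  -- choose k
  set m : ℕ := Nat.ceil (t/(d:ℝ)) + 1 with hmdef
  set k : ℕ := m + 1 with hkdef
  have hk1 : 1 ≤ k := by omega
  have htd0 : 0 ≤ t/(d:ℝ) := div_nonneg ht0 (le_of_lt hdR)
  have hceil : (Nat.ceil (t/(d:ℝ)) : ℝ) < t/(d:ℝ) + 1 := Nat.ceil_lt_add_one htd0
  have hkR : (k:ℝ) ≤ t/(d:ℝ) + 3 := by
    rw [hkdef, hmdef]; push_cast; linarith
  have hkge : t/(d:ℝ) ≤ (k:ℝ) := by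
    have h1 : t/(d:ℝ) ≤ (Nat.ceil (t/(d:ℝ)) : ℝ) := Nat.le_ceil _
    rw [hkdef, hmdef]; push_cast; linarith
  -- moment bound
  have hb := bonami k hk1 Finset.univ d a (fun S _ => Finset.subset_univ S) hdeg
  have hPsum : ∀ (j : ℕ), ∑ x : Fin n → Bool, (polyF n a x)^j = ∑ x : Fin n → Bool, (P x)^j := by
    intro j
    exact Finset.sum_congr rfl (fun x _ => by rw [hP x])
  rw [hPsum, hPsum, hsum2, div_self (ne_of_gt hW), mul_one] at hb
  -- Hölder on A
  set SA : ℝ := ∑ x ∈ A, (P x)^2 with hSAdef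
  have hSA0 : 0 ≤ SA := Finset.sum_nonneg (fun x _ => sq_nonneg _)
  have hhold := pow_sum_div_card_le_sum_pow (s := A) (f := fun x => (P x)^2)
    (fun i _ => sq_nonneg _) m
  have hAk : SA^k / (A.card:ℝ)^m ≤ ∑ x ∈ A, ((P x)^2)^k := by
    rw [hkdef]; exact hhold
  have hsub : ∑ x ∈ A, ((P x)^2)^k ≤ ∑ x : Fin n → Bool, (P x)^(2*k) := by
    calc ∑ x ∈ A, ((P x)^2)^k = ∑ x ∈ A, (P x)^(2*k) :=
        Finset.sum_congr rfl (fun x _ => (pow_mul (P x) 2 k).symm)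
      _ ≤ ∑ x : Fin n → Bool, (P x)^(2*k) := by
          apply Finset.sum_le_sum_of_subset_of_nonneg (Finset.subset_univ A)
          intro x _ _
          rw [pow_mul]; positivity
  have hchain : (SA / (A.card:ℝ))^k ≤ (1/ε) * ((2*(k:ℝ)-1)^d)^k := by
    have h1 : SA^k ≤ (A.card:ℝ)^m * ((2:ℝ)^n * ((2*(k:ℝ)-1)^d)^k) := by
      have h2 : SA^k / (A.card:ℝ)^m ≤ (2:ℝ)^n * ((2*(k:ℝ)-1)^d)^k :=
        le_trans hAk (le_trans hsub hb)
      have h3 : 0 < (A.card:ℝ)^m := by positivity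
      calc SA^k = (SA^k / (A.card:ℝ)^m) * (A.card:ℝ)^m := by field_simp
        _ ≤ ((2:ℝ)^n * ((2*(k:ℝ)-1)^d)^k) * (A.card:ℝ)^m := by
            apply mul_le_mul_of_nonneg_right h2 (le_of_lt h3)
        _ = (A.card:ℝ)^m * ((2:ℝ)^n * ((2*(k:ℝ)-1)^d)^k) := by ring
    rw [div_pow]
    rw [div_le_iff₀ (by positivity)]
    have hNk : (A.card:ℝ)^k = (A.card:ℝ)^m * (A.card:ℝ) := by
      rw [hkdef, pow_succ]
    calc SA^k ≤ (A.card:ℝ)^m * ((2:ℝ)^n * ((2*(k:ℝ)-1)^d)^k) := h1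
      _ = (1/ε) * ((2*(k:ℝ)-1)^d)^k * ((A.card:ℝ)^m * (A.card:ℝ)) := by
          rw [hεdef]; field_simp
      _ = 1/ε * ((2*(k:ℝ)-1)^d)^k * (A.card:ℝ)^k := by rw [hNk]
  -- numeric bound
  set mb : ℝ := max 1 (t/(d:ℝ)) with hmbdef
  have hmb1 : (1:ℝ) ≤ mb := le_max_left _ _
  have hmbge : t/(d:ℝ) ≤ mb := le_max_right _ _
  have hmb0 : (0:ℝ) ≤ mb := by linarith
  have hM : mb^d = max 1 ((t/(d:ℝ))^d) := by
    rcases le_or_gt (t/(d:ℝ)) 1 with h | h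
    · rw [hmbdef, max_eq_left h, one_pow, max_eq_left (pow_le_one₀ htd0 h)]
    · rw [hmbdef, max_eq_right (le_of_lt h), max_eq_right (one_le_pow₀ (le_of_lt h))]
  have hkey : (1/ε) * ((2*(k:ℝ)-1)^d)^k ≤ ((20:ℝ)^d * mb^d)^k := by
    have hexp1 : (1/ε) ≤ ((Real.exp 1)^d)^k := by
      rw [← hexp]
      have h1 : t ≤ (d:ℝ) * (k:ℝ) := by
        have := mul_le_mul_of_nonneg_left hkge (le_of_lt hdR)
        calc t = (d:ℝ) * (t/(d:ℝ)) := by field_simp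
          _ ≤ (d:ℝ) * (k:ℝ) := this
      calc Real.exp t ≤ Real.exp ((d:ℝ) * (k:ℝ)) := Real.exp_le_exp.mpr h1
        _ = ((Real.exp 1)^d)^k := by
            rw [← pow_mul, ← Real.exp_nat_mul]
            congr 1
            push_cast; ring
    have h2k : (0:ℝ) ≤ 2*(k:ℝ)-1 := by
      have : (1:ℝ) ≤ (k:ℝ) := by exact_mod_cast hk1
      linarith
    have hb7 : 2*(k:ℝ)-1 ≤ 7 * mb := by
      have h1 : 2*(k:ℝ) - 1 ≤ 2*(t/(d:ℝ)) + 5 := by linarith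
      have h2 : 2*(t/(d:ℝ)) + 5 ≤ 2*mb + 5*mb := by linarith
      linarith
    have hpow7 : ((2*(k:ℝ)-1)^d)^k ≤ ((7*mb)^d)^k := by
      apply pow_le_pow_left₀ (by positivity)
      exact pow_le_pow_left₀ h2k hb7 d
    have hcomb : (1/ε) * ((2*(k:ℝ)-1)^d)^k ≤ ((Real.exp 1)^d)^k * ((7*mb)^d)^k := by
      apply mul_le_mul hexp1 hpow7 (by positivity) (by positivity)
    calc (1/ε) * ((2*(k:ℝ)-1)^d)^k ≤ ((Real.exp 1)^d)^k * ((7*mb)^d)^k := hcomb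
      _ = (((Real.exp 1) * (7*mb))^d)^k := by rw [← mul_pow, ← mul_pow]
      _ ≤ ((20 * mb)^d)^k := by
          apply pow_le_pow_left₀ (by positivity)
          apply pow_le_pow_left₀ (by positivity)
          have := Real.exp_one_lt_d9
          nlinarith
      _ = ((20:ℝ)^d * mb^d)^k := by rw [mul_pow]
  -- conclude
  have hgoalpow : (SA / (A.card:ℝ))^k ≤ ((20:ℝ)^d * mb^d)^k := le_trans hchain hkey
  have hfinal : SA / (A.card:ℝ) ≤ (20:ℝ)^d * mb^d := by
    apply le_of_pow_le_pow_left₀ (by omega : k ≠ 0) (by positivity) hgoalpow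
  rw [hM] at hfinal
  exact hfinal
end

section
/- There exists a universal constant C > 0 such that for every n ≥ 1, d ≥ 1, every polynomial P of degree at most d on {-1,1}^n with E|P(X)|^2 = 1 (X uniform on {-1,1}^n), and every non-empty subset A ⊆ {-1,1}^n with relative size ε = #A / 2^n, one has (1/#A) · Σ_{x∈A} |∇P(x)|^2 ≤ C^d · max{1, (|log ε| / d)^{d-1}}, where |∇P(x)|^2 = Σ_{i=1}^n |∂_i P(x)|^2. -/
/-!
Write `P = ∑_S a_S χ_S`. The derivative `∂_i P` has Walsh coefficients `a_{S ∪ {i}}`, so it has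
degree `d - 1`, and the squared coefficients of all the `∂_i P` add up to `∑_S |S| a_S² ≤ d`.
Bonami's inequality `E f^{2k} ≤ (∑_S (2k)^{|S|} a_S²)^k`, proved one coordinate at a time from the
two-point inequality `((a + b)^{2k} + (a - b)^{2k}) / 2 ≤ (a² + 2k b²)^k` and Minkowski's inequality
in `L^k`, then gives `E |∇P|^{2k} ≤ ((2k)^{d-1} d)^k`. By Jensen's inequality on `A`, the mean of
`|∇P|²` over `A` is at most `ε^{-1/k} (2k)^{d-1} d`, and `k ≈ max 1 (|log ε| / d)` makes
`ε^{-1/k} ≤ e^d`.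
-/

open Classical

open Finset

theorem Nat.choose_two_mul_two_mul_le (k j : ℕ) :
    (2 * k).choose (2 * j) ≤ k.choose j * (2 * k) ^ j := by
  induction j with
  | zero => simp
  | succ j ih =>
    have h₁ := Nat.choose_succ_right_eq (2 * k) (2 * j)
    have h₂ := Nat.choose_succ_right_eq (2 * k) (2 * j + 1)
    have h₃ := Nat.choose_succ_right_eq k j
    have hsub : 2 * k - 2 * j = 2 * (k - j) := by omega
    have hle : 2 * k - (2 * j + 1) ≤ 2 * k * (2 * j + 1) :=
      (Nat.sub_le _ _).trans (Nat.le_mul_of_pos_right _ (by omega))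
    refine Nat.le_of_mul_le_mul_right (c := (2 * j + 1) * (2 * j + 2)) ?_ (by positivity)
    calc (2 * k).choose (2 * (j + 1)) * ((2 * j + 1) * (2 * j + 2))
        = (2 * k).choose (2 * j) * (2 * (k - j)) * (2 * k - (2 * j + 1)) := by
          rw [show 2 * (j + 1) = 2 * j + 1 + 1 by ring, ← hsub, ← h₁, mul_comm _ (2 * j + 2),
            ← mul_assoc, h₂]
          ring
      _ ≤ k.choose j * (2 * k) ^ j * (2 * (k - j)) * (2 * k * (2 * j + 1)) := by gcongr
      _ = k.choose (j + 1) * (2 * k) ^ (j + 1) * ((2 * j + 1) * (2 * j + 2)) := by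
          rw [show k.choose (j + 1) * (2 * k) ^ (j + 1) * ((2 * j + 1) * (2 * j + 2))
            = (k.choose (j + 1) * (j + 1)) * (2 * k) ^ j * (2 * k) * (2 * (2 * j + 1)) by ring, h₃]
          ring

theorem sum_range_two_mul_add_one_mul_one_add_neg_one_pow (t : ℕ → ℝ) (k : ℕ) :
    ∑ m ∈ range (2 * k + 1), (1 + (-1) ^ m) * t m = 2 * ∑ j ∈ range (k + 1), t (2 * j) := by
  induction k with
  | zero => norm_num
  | succ k ih =>
    rw [show 2 * (k + 1) + 1 = 2 * k + 1 + 1 + 1 by ring, sum_range_succ, sum_range_succ, ih,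
      sum_range_succ (n := k + 1)]
    simp only [pow_succ, pow_mul, pow_zero, mul_neg, mul_one, neg_neg, one_pow, add_neg_cancel,
      zero_mul, add_zero, Nat.mul_succ]
    ring

theorem add_pow_add_sub_pow_le (a b : ℝ) (k : ℕ) :
    ((a + b) ^ (2 * k) + (a - b) ^ (2 * k)) / 2 ≤ (a ^ 2 + 2 * k * b ^ 2) ^ k := by
  have hexpand : (a + b) ^ (2 * k) + (a - b) ^ (2 * k)
      = ∑ m ∈ range (2 * k + 1), (1 + (-1) ^ m) * (b ^ m * a ^ (2 * k - m) * (2 * k).choose m) := by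
    rw [add_comm a, sub_eq_neg_add, add_pow, add_pow, ← sum_add_distrib]
    refine sum_congr rfl fun m _ => ?_
    rw [neg_pow]; ring
  rw [hexpand, sum_range_two_mul_add_one_mul_one_add_neg_one_pow, add_comm (a ^ 2), add_pow,
    mul_div_cancel_left₀ _ two_ne_zero]
  refine sum_le_sum fun j hj => ?_
  have hjk : j ≤ k := Nat.lt_succ_iff.mp (mem_range.mp hj)
  rw [show 2 * k - 2 * j = 2 * (k - j) by omega, pow_mul, pow_mul, mul_pow]
  have hchoose : ((2 * k).choose (2 * j) : ℝ) ≤ k.choose j * (2 * k : ℝ) ^ j := by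
    exact_mod_cast Nat.choose_two_mul_two_mul_le k j
  calc (b ^ 2) ^ j * (a ^ 2) ^ (k - j) * ((2 * k).choose (2 * j) : ℝ)
      ≤ (b ^ 2) ^ j * (a ^ 2) ^ (k - j) * (k.choose j * (2 * k : ℝ) ^ j) := by gcongr
    _ = _ := by ring

theorem sum_mul_add_pow_le {ι : Type*} {s : Finset ι} {w u v : ι → ℝ} {k : ℕ} (hk : k ≠ 0)
    (hw : ∀ i ∈ s, 0 ≤ w i) (hu : ∀ i ∈ s, 0 ≤ u i) (hv : ∀ i ∈ s, 0 ≤ v i) {A B : ℝ}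
    (hA : 0 ≤ A) (hB : 0 ≤ B) (huA : ∑ i ∈ s, w i * u i ^ k ≤ A ^ k)
    (hvB : ∑ i ∈ s, w i * v i ^ k ≤ B ^ k) :
    ∑ i ∈ s, w i * (u i + v i) ^ k ≤ (A + B) ^ k := by
  -- Minkowski's inequality for `w^(1/k) u` and `w^(1/k) v`
  set r : ℝ := (k : ℝ)⁻¹
  have hpow : ∀ f : ι → ℝ, ∀ i ∈ s, w i * f i ^ k = (w i ^ r * f i) ^ (k : ℝ) := fun f i hi => by
    rw [Real.rpow_natCast, mul_pow, Real.rpow_inv_natCast_pow (hw i hi) hk]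
  have hroot : ∀ {X C : ℝ}, 0 ≤ X → 0 ≤ C → X ≤ C ^ k → X ^ (1 / (k : ℝ)) ≤ C :=
    fun hX hC h => by
      rw [one_div, ← Real.pow_rpow_inv_natCast hC hk]
      exact Real.rpow_le_rpow hX h (by positivity)
  have hmink := Real.Lp_add_le_of_nonneg (s := s) (f := fun i => w i ^ r * u i)
    (g := fun i => w i ^ r * v i) (p := k) (by exact_mod_cast Nat.one_le_iff_ne_zero.mpr hk)
    (fun i hi => mul_nonneg (Real.rpow_nonneg (hw i hi) _) (hu i hi))
    (fun i hi => mul_nonneg (Real.rpow_nonneg (hw i hi) _) (hv i hi))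
  simp only [← mul_add] at hmink
  rw [← sum_congr rfl (hpow u), ← sum_congr rfl (hpow v),
    ← sum_congr rfl (hpow (fun i => u i + v i))] at hmink
  have hsum : 0 ≤ ∑ i ∈ s, w i * (u i + v i) ^ k :=
    sum_nonneg fun i hi => mul_nonneg (hw i hi) (pow_nonneg (add_nonneg (hu i hi) (hv i hi)) k)
  calc ∑ i ∈ s, w i * (u i + v i) ^ k
      = ((∑ i ∈ s, w i * (u i + v i) ^ k) ^ (1 / (k : ℝ))) ^ k := by
        rw [one_div, Real.rpow_inv_natCast_pow hsum hk]
    _ ≤ (A + B) ^ k := by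
        gcongr
        refine hmink.trans (add_le_add (hroot ?_ hA huA) (hroot ?_ hB hvB))
        · exact sum_nonneg fun i hi => mul_nonneg (hw i hi) (pow_nonneg (hu i hi) k)
        · exact sum_nonneg fun i hi => mul_nonneg (hw i hi) (pow_nonneg (hv i hi) k)

theorem sum_update_true_add_update_false {ι : Type*} [Fintype ι] [DecidableEq ι]
    (F : (ι → Bool) → ℝ) (i : ι) :
    ∑ x, (F (Function.update x i true) + F (Function.update x i false)) = 2 * ∑ x, F x := by
  -- the two updates of `x` at `i` are `x` itself and `x` with its `i`-th coordinate flipped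
  set flip : (ι → Bool) → ι → Bool := fun x => Function.update x i (!x i)
  have hflip : Function.Involutive flip := fun x => by simp [flip]
  have hpair : ∀ x,
      F (Function.update x i true) + F (Function.update x i false) = F x + F (flip x) := by
    intro x
    have hx : Function.update x i (x i) = x := Function.update_eq_self i x
    cases h : x i <;> simp only [flip, h] at hx ⊢ <;> simp [hx, add_comm]
  have hsum : ∑ x, F (flip x) = ∑ x, F x := by
    simpa only [Function.Involutive.coe_toPerm] using Equiv.sum_comp (hflip.toPerm flip) F
  rw [sum_congr rfl fun x _ => hpair x, sum_add_distrib, hsum, two_mul]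

section Cube

variable {n : ℕ}

theorem cubeE_eq_sum_mul (f : (Fin n → Bool) → ℝ) : cubeE n f = ∑ x, (2 ^ n)⁻¹ * f x := by
  rw [cubeE, ← mul_sum, div_eq_inv_mul]

theorem cubeE_const (c : ℝ) : cubeE n (fun _ => c) = c := by
  simp [cubeE]

theorem cubeE_add (f g : (Fin n → Bool) → ℝ) :
    cubeE n (fun x => f x + g x) = cubeE n f + cubeE n g := by
  simp only [cubeE, sum_add_distrib, add_div]

theorem cubeE_const_mul (c : ℝ) (f : (Fin n → Bool) → ℝ) :
    cubeE n (fun x => c * f x) = c * cubeE n f := by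
  simp only [cubeE, ← mul_sum, mul_div_assoc]

theorem cubeE_mono {f g : (Fin n → Bool) → ℝ} (h : ∀ x, f x ≤ g x) : cubeE n f ≤ cubeE n g := by
  unfold cubeE
  gcongr with x
  exact h x

theorem cubeE_nonneg {f : (Fin n → Bool) → ℝ} (h : ∀ x, 0 ≤ f x) : 0 ≤ cubeE n f := by
  simpa [cubeE_const] using cubeE_mono h

theorem cubeE_add_pow_le {u v : (Fin n → Bool) → ℝ} {k : ℕ} (hk : k ≠ 0) (hu : ∀ x, 0 ≤ u x)
    (hv : ∀ x, 0 ≤ v x) {A B : ℝ} (hA : 0 ≤ A) (hB : 0 ≤ B)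
    (huA : cubeE n (fun x => u x ^ k) ≤ A ^ k) (hvB : cubeE n (fun x => v x ^ k) ≤ B ^ k) :
    cubeE n (fun x => (u x + v x) ^ k) ≤ (A + B) ^ k := by
  rw [cubeE_eq_sum_mul] at huA hvB ⊢
  exact sum_mul_add_pow_le hk (fun _ _ => by positivity) (fun x _ => hu x) (fun x _ => hv x)
    hA hB huA hvB

theorem cubeE_sum_pow_le {ι : Type*} {k : ℕ} (hk : k ≠ 0) (s : Finset ι)
    {u : ι → (Fin n → Bool) → ℝ} {A : ι → ℝ} (hu : ∀ i x, 0 ≤ u i x) (hA : ∀ i, 0 ≤ A i)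
    (huA : ∀ i ∈ s, cubeE n (fun x => u i x ^ k) ≤ A i ^ k) :
    cubeE n (fun x => (∑ i ∈ s, u i x) ^ k) ≤ (∑ i ∈ s, A i) ^ k := by
  classical
  induction s using Finset.induction_on with
  | empty => simp [zero_pow hk, cubeE_const]
  | insert i s hi ih =>
    simp only [sum_insert hi]
    exact cubeE_add_pow_le hk (hu i) (fun x => sum_nonneg fun j _ => hu j x) (hA i)
      (sum_nonneg fun j _ => hA j) (huA i (mem_insert_self i s))
      (ih fun j hj => huA j (mem_insert_of_mem hj))

theorem cubeE_eq_cubeE_update (F : (Fin n → Bool) → ℝ) (i : Fin n) :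
    cubeE n F
      = cubeE n (fun x => (F (Function.update x i true) + F (Function.update x i false)) / 2) := by
  simp only [cubeE, ← sum_div, sum_update_true_add_update_false]
  ring

theorem cubeE_comp_add_cubeSign_mul (φ : ℝ → ℝ) {g h : (Fin n → Bool) → ℝ} (i : Fin n)
    (hg : ∀ x b, g (Function.update x i b) = g x) (hh : ∀ x b, h (Function.update x i b) = h x) :
    cubeE n (fun x => φ (g x + cubeSign (x i) * h x))
      = cubeE n (fun x => (φ (g x + h x) + φ (g x - h x)) / 2) := by
  rw [cubeE_eq_cubeE_update _ i]
  simp [hg, hh, cubeSign, sub_eq_add_neg]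

end Cube

def walsh {ι : Type*} (S : Finset ι) (x : ι → Bool) : ℝ := ∏ i ∈ S, cubeSign (x i)

noncomputable def walshSum {ι : Type*} (J : Finset ι) (a : Finset ι → ℝ) (x : ι → Bool) : ℝ :=
  ∑ S ∈ J.powerset, a S * walsh S x

theorem walshSum_empty {ι : Type*} (a : Finset ι → ℝ) (x : ι → Bool) : walshSum ∅ a x = a ∅ := by
  simp [walshSum, walsh]

section Walsh

variable {ι : Type*} [DecidableEq ι]

theorem walshSum_insert {i : ι} {J : Finset ι} (hi : i ∉ J) (a : Finset ι → ℝ) (x : ι → Bool) :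
    walshSum (insert i J) a x
      = walshSum J a x + cubeSign (x i) * walshSum J (fun S => a (insert i S)) x := by
  rw [walshSum, sum_powerset_insert hi, walshSum, walshSum, mul_sum]
  congr 1
  refine sum_congr rfl fun S hS => ?_
  rw [walsh, prod_insert fun hiS => hi (mem_powerset.mp hS hiS), walsh]
  ring

theorem walshSum_update_of_notMem {i : ι} {J : Finset ι} (hi : i ∉ J) (a : Finset ι → ℝ)
    (x : ι → Bool) (b : Bool) : walshSum J a (Function.update x i b) = walshSum J a x := by
  refine sum_congr rfl fun S hS => congrArg _ (prod_congr rfl fun j hj => ?_)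
  rw [Function.update_of_ne (ne_of_mem_of_not_mem (mem_powerset.mp hS hj) hi)]

end Walsh

section Hypercontractivity

variable {n : ℕ}

theorem cubeE_walshSum_sq (J : Finset (Fin n)) (a : Finset (Fin n) → ℝ) :
    cubeE n (fun x => walshSum J a x ^ 2) = ∑ S ∈ J.powerset, a S ^ 2 := by
  induction J using Finset.induction_on generalizing a with
  | empty => simp [walshSum_empty, cubeE_const]
  | insert i J hi ih =>
    simp only [walshSum_insert hi, sum_powerset_insert hi]
    rw [cubeE_comp_add_cubeSign_mul (· ^ 2) i (walshSum_update_of_notMem hi a)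
      (walshSum_update_of_notMem hi (fun S => a (insert i S)))]
    simp only [show ∀ u v : ℝ, ((u + v) ^ 2 + (u - v) ^ 2) / 2 = u ^ 2 + v ^ 2 from
      fun u v => by ring]
    rw [cubeE_add, ih, ih]

theorem cubeE_add_cubeSign_mul_pow_le {k : ℕ} (hk : k ≠ 0) {g h : (Fin n → Bool) → ℝ} (i : Fin n)
    (hg : ∀ x b, g (Function.update x i b) = g x) (hh : ∀ x b, h (Function.update x i b) = h x)
    {A B : ℝ} (hA : 0 ≤ A) (hB : 0 ≤ B) (hgA : cubeE n (fun x => g x ^ (2 * k)) ≤ A ^ k)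
    (hhB : cubeE n (fun x => h x ^ (2 * k)) ≤ B ^ k) :
    cubeE n (fun x => (g x + cubeSign (x i) * h x) ^ (2 * k)) ≤ (A + 2 * k * B) ^ k := by
  have hhB' : cubeE n (fun x => (2 * k * h x ^ 2) ^ k) ≤ (2 * k * B) ^ k :=
    calc cubeE n (fun x => (2 * k * h x ^ 2) ^ k)
        = (2 * k) ^ k * cubeE n (fun x => h x ^ (2 * k)) := by
          rw [← cubeE_const_mul]
          simp only [mul_pow, ← pow_mul]
      _ ≤ (2 * k) ^ k * B ^ k := by gcongr
      _ = (2 * k * B) ^ k := (mul_pow ..).symm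
  rw [cubeE_comp_add_cubeSign_mul (· ^ (2 * k)) i hg hh]
  calc cubeE n (fun x => ((g x + h x) ^ (2 * k) + (g x - h x) ^ (2 * k)) / 2)
      ≤ cubeE n (fun x => (g x ^ 2 + 2 * k * h x ^ 2) ^ k) :=
        cubeE_mono fun x => add_pow_add_sub_pow_le (g x) (h x) k
    _ ≤ (A + 2 * k * B) ^ k := cubeE_add_pow_le hk (fun x => sq_nonneg (g x))
        (fun x => by positivity) hA (by positivity) (by simpa only [← pow_mul] using hgA) hhB'

theorem cubeE_walshSum_pow_le {k : ℕ} (hk : k ≠ 0) (J : Finset (Fin n))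
    (a : Finset (Fin n) → ℝ) :
    cubeE n (fun x => walshSum J a x ^ (2 * k))
      ≤ (∑ S ∈ J.powerset, (2 * k : ℝ) ^ #S * a S ^ 2) ^ k := by
  induction J using Finset.induction_on generalizing a with
  | empty => simp [walshSum_empty, cubeE_const, pow_mul]
  | insert i J hi ih =>
    have hweight : ∑ S ∈ (insert i J).powerset, (2 * k : ℝ) ^ #S * a S ^ 2
        = ∑ S ∈ J.powerset, (2 * k : ℝ) ^ #S * a S ^ 2
          + 2 * k * ∑ S ∈ J.powerset, (2 * k : ℝ) ^ #S * a (insert i S) ^ 2 := by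
      rw [sum_powerset_insert hi, mul_sum]
      congr 1
      refine sum_congr rfl fun S hS => ?_
      rw [card_insert_of_notMem fun hiS => hi (mem_powerset.mp hS hiS), pow_succ]
      ring
    simp only [walshSum_insert hi, hweight]
    exact cubeE_add_cubeSign_mul_pow_le hk i (walshSum_update_of_notMem hi a)
      (walshSum_update_of_notMem hi _) (sum_nonneg fun S _ => by positivity)
      (sum_nonneg fun S _ => by positivity) (ih a) (ih _)

end Hypercontractivity

theorem sum_pow_card_mul_sq_le {ι : Type*} {T : Finset (Finset ι)} {a : Finset ι → ℝ} {c : ℝ}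
    {d : ℕ} (hc : 1 ≤ c) (ha : ∀ S ∈ T, d < #S → a S = 0) :
    ∑ S ∈ T, c ^ #S * a S ^ 2 ≤ c ^ d * ∑ S ∈ T, a S ^ 2 := by
  rw [mul_sum]
  refine sum_le_sum fun S hS => ?_
  rcases le_or_gt #S d with hSd | hSd
  · gcongr
  · simp [ha S hS hSd]

theorem sum_sum_powerset_erase_insert {ι : Type*} [Fintype ι] [DecidableEq ι]
    (F : Finset ι → ℝ) :
    ∑ i, ∑ S ∈ (univ.erase i).powerset, F (insert i S) = ∑ S, #S * F S := by
  have hsplit : ∀ i, ∑ S ∈ (univ.erase i).powerset, F (insert i S)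
      = ∑ S, if i ∈ S then F S else 0 := by
    intro i
    rw [← powerset_univ, ← insert_erase (mem_univ i), sum_powerset_insert (notMem_erase i univ),
      erase_insert (notMem_erase i univ),
      sum_eq_zero fun S hS => if_neg fun hiS => notMem_erase i univ (mem_powerset.mp hS hiS),
      zero_add]
    simp only [mem_insert_self, if_true]
  simp only [hsplit]
  rw [sum_comm]
  simp [sum_ite_mem, ← nsmul_eq_mul]

section Gradient

variable {n : ℕ}

theorem discDeriv_walshSum_univ (a : Finset (Fin n) → ℝ) (i : Fin n) :
    discDeriv n (walshSum univ a) i = walshSum (univ.erase i) (fun S => a (insert i S)) := by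
  have hi := notMem_erase i (univ : Finset (Fin n))
  funext x
  rw [discDeriv, ← insert_erase (mem_univ i), walshSum_insert hi, walshSum_insert hi]
  simp [walshSum_update_of_notMem hi, cubeSign]

theorem cubeE_gradSq_pow_le {d k : ℕ} (hk : k ≠ 0) (a : Finset (Fin n) → ℝ)
    (ha : ∀ S, d < #S → a S = 0) :
    cubeE n (fun x => gradSq n (walshSum univ a) x ^ k)
      ≤ ((2 * k : ℝ) ^ (d - 1) * (d * ∑ S, a S ^ 2)) ^ k := by
  set w : Fin n → ℝ := fun i => ∑ S ∈ (univ.erase i).powerset, a (insert i S) ^ 2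
  have hderiv : ∀ i ∈ univ, cubeE n (fun x => (discDeriv n (walshSum univ a) i x ^ 2) ^ k)
      ≤ ((2 * k : ℝ) ^ (d - 1) * w i) ^ k := by
    intro i _
    simp only [← pow_mul, discDeriv_walshSum_univ]
    refine (cubeE_walshSum_pow_le hk _ _).trans (pow_le_pow_left₀ (by positivity) ?_ k)
    refine sum_pow_card_mul_sq_le (by norm_cast; omega) fun S hS hSd => ha _ ?_
    rw [card_insert_of_notMem fun hiS => notMem_erase i univ (mem_powerset.mp hS hiS)]
    omega
  have hw : ∑ i, w i ≤ d * ∑ S, a S ^ 2 := by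
    rw [sum_sum_powerset_erase_insert (fun S => a S ^ 2), mul_sum]
    refine sum_le_sum fun S _ => ?_
    rcases le_or_gt #S d with hSd | hSd
    · gcongr
    · simp [ha S hSd]
  calc cubeE n (fun x => gradSq n (walshSum univ a) x ^ k)
      ≤ (∑ i, (2 * k : ℝ) ^ (d - 1) * w i) ^ k :=
        cubeE_sum_pow_le hk univ (fun i x => sq_nonneg _) (fun i => by positivity) hderiv
    _ ≤ _ := by
        rw [← mul_sum]
        gcongr

end Gradient

theorem sum_div_card_le_of_cubeE_pow_le {n k : ℕ} (hk : k ≠ 0) {G : (Fin n → Bool) → ℝ}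
    (hG : ∀ x, 0 ≤ G x) {M c : ℝ} (hM : 0 ≤ M) (hc : 0 ≤ c)
    (hGM : cubeE n (fun x => G x ^ k) ≤ M ^ k) {A : Finset (Fin n → Bool)} (hA : A.Nonempty)
    (hAc : 2 ^ n ≤ #A * c ^ k) :
    (∑ x ∈ A, G x) / #A ≤ M * c := by
  obtain ⟨m, rfl⟩ := Nat.exists_eq_succ_of_ne_zero hk
  have hcard : (0 : ℝ) < #A := by exact_mod_cast hA.card_pos
  rw [← pow_le_pow_iff_left₀ (div_nonneg (sum_nonneg fun x _ => hG x) hcard.le) (by positivity) hk]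
  calc ((∑ x ∈ A, G x) / #A) ^ (m + 1) = (∑ x ∈ A, G x) ^ (m + 1) / #A ^ m / #A := by
        rw [div_pow, div_div, ← pow_succ]
    _ ≤ (∑ x, G x ^ (m + 1)) / #A := by
        gcongr
        exact (pow_sum_div_card_le_sum_pow (fun x _ => hG x) m).trans
          (sum_le_univ_sum_of_nonneg fun x => pow_nonneg (hG x) _)
    _ = 2 ^ n * cubeE n (fun x => G x ^ (m + 1)) / #A := by
        rw [cubeE, mul_div_cancel₀ _ (by positivity)]
    _ ≤ #A * c ^ (m + 1) * M ^ (m + 1) / #A := by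
        gcongr
        exact cubeE_nonneg fun x => pow_nonneg (hG x) _
    _ = (M * c) ^ (m + 1) := by
        field_simp
        ring

theorem two_mul_pow_mul_mul_exp_le (d : ℕ) {κ t : ℝ} (hκ : 0 ≤ κ) (hκt : κ ≤ 2 * max 1 t) :
    (2 * κ) ^ (d - 1) * d * Real.exp d ≤ (8 * Real.exp 1) ^ d * max 1 (t ^ (d - 1)) := by
  have hmax : (max 1 t) ^ (d - 1) ≤ max 1 (t ^ (d - 1)) := by
    rcases le_total t 1 with ht | ht
    · simp [max_eq_left ht]
    · rw [max_eq_right ht, max_eq_right (one_le_pow₀ ht)]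
  have hd : (d : ℝ) ≤ 2 ^ d := by exact_mod_cast Nat.lt_two_pow_self.le
  have h4 : (4 : ℝ) ^ (d - 1) ≤ 4 ^ d := pow_le_pow_right₀ (by norm_num) (Nat.sub_le d 1)
  have hκ' : (2 * κ) ^ (d - 1) ≤ 4 ^ (d - 1) * max 1 (t ^ (d - 1)) :=
    calc (2 * κ) ^ (d - 1) ≤ (4 * max 1 t) ^ (d - 1) :=
        pow_le_pow_left₀ (by positivity) (by linarith) _
      _ = 4 ^ (d - 1) * (max 1 t) ^ (d - 1) := mul_pow ..
      _ ≤ 4 ^ (d - 1) * max 1 (t ^ (d - 1)) := by gcongr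
  calc (2 * κ) ^ (d - 1) * d * Real.exp d
      ≤ (4 ^ (d - 1) * max 1 (t ^ (d - 1))) * 2 ^ d * Real.exp d := by gcongr
    _ ≤ (4 ^ d * max 1 (t ^ (d - 1))) * 2 ^ d * Real.exp d := by gcongr
    _ = (8 * Real.exp 1) ^ d * max 1 (t ^ (d - 1)) := by
        rw [mul_pow, Real.exp_one_pow, show (8 : ℝ) = 4 * 2 by norm_num, mul_pow]
        ring

/-- Restricted second-moment bound for the gradient: for `A ⊆ {-1,1}^n` of relative size `ε`,
`(1/#A) ∑_{x ∈ A} |∇P(x)|² ≤ C^d max{1, (|log ε|/d)^{d-1}}` when `E|P(X)|² = 1`. -/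
theorem restricted_gradient_second_moment :
    ∃ C : ℝ, 0 < C ∧
      ∀ (n d : ℕ), 1 ≤ n → 1 ≤ d →
        ∀ P : (Fin n → Bool) → ℝ, IsPolyDeg n d P →
          cubeE n (fun x => (P x) ^ 2) = 1 →
            ∀ A : Finset (Fin n → Bool), A.Nonempty →
              (∑ x ∈ A, gradSq n P x) / (A.card : ℝ) ≤
                C ^ d *
                  max 1 ((|Real.log ((A.card : ℝ) / 2 ^ n)| / (d : ℝ)) ^ (d - 1)) := by
  refine ⟨8 * Real.exp 1, by positivity, fun n d _ hd P hP hnorm A hA => ?_⟩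
  obtain ⟨a, ha, hPa⟩ := hP
  obtain rfl : P = walshSum univ a := funext fun x => by rw [hPa, walshSum, powerset_univ]; rfl
  have hparseval : ∑ S, a S ^ 2 = 1 := by rw [← hnorm, cubeE_walshSum_sq, powerset_univ]
  set t := |Real.log ((#A : ℝ) / 2 ^ n)| / d
  set k := ⌈max 1 t⌉₊
  have hk : k ≠ 0 := (Nat.ceil_pos.mpr (lt_max_of_lt_left one_pos)).ne'
  have hcard : (0 : ℝ) < #A := by exact_mod_cast hA.card_pos
  have hAk : 2 ^ n ≤ #A * Real.exp d ^ k := by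
    rw [← div_le_iff₀' hcard, ← Real.exp_nat_mul]
    calc (2 : ℝ) ^ n / #A = Real.exp (-Real.log (#A / 2 ^ n)) := by
          rw [Real.exp_neg, Real.exp_log (by positivity), inv_div]
      _ ≤ Real.exp (k * d) := by
          refine Real.exp_le_exp.mpr ((neg_le_abs _).trans ?_)
          rw [← div_le_iff₀ (Nat.cast_pos.mpr hd)]
          exact (le_max_right 1 t).trans (Nat.le_ceil _)
  calc (∑ x ∈ A, gradSq n (walshSum univ a) x) / #A
      ≤ (2 * k : ℝ) ^ (d - 1) * (d * 1) * Real.exp d :=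
        sum_div_card_le_of_cubeE_pow_le hk (fun x => sum_nonneg fun i _ => sq_nonneg _)
          (by positivity) (Real.exp_pos _).le (hparseval ▸ cubeE_gradSq_pow_le hk a ha) hA hAk
    _ ≤ _ := by
        rw [mul_one]
        exact two_mul_pow_mul_mul_exp_le d k.cast_nonneg
          (Nat.ceil_lt_two_mul (by linarith [le_max_left 1 t])).le
end

section
/- There exists a universal constant C > 0 such that the following holds. Let n ≥ 1, d ≥ 1, let P be a polynomial of degree at most d on {-1,1}^n with E P(X) = 0 (X uniform on {-1,1}^n), and set σ = (E|P(X)|^2)^{1/2} and σ_+ = (E[(max(P(X),0))^2])^{1/2}. Then σ_+ ≥ C^{-d} · σ. -/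
open Classical

namespace PPLB

noncomputable def polyval (n : ℕ) (a : Finset (Fin n) → ℝ) (x : Fin n → Bool) : ℝ :=
  ∑ S : Finset (Fin n), a S * ∏ i ∈ S, cubeSign (x i)

lemma cubeE_congr {n : ℕ} {f g : (Fin n → Bool) → ℝ} (h : ∀ x, f x = g x) :
    cubeE n f = cubeE n g := by
  unfold cubeE; congr 1; exact Finset.sum_congr rfl fun x _ => h x

lemma cubeE_add (n : ℕ) (f g : (Fin n → Bool) → ℝ) :
    cubeE n (fun x => f x + g x) = cubeE n f + cubeE n g := by
  unfold cubeE; rw [Finset.sum_add_distrib]; ring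

lemma cubeE_sub (n : ℕ) (f g : (Fin n → Bool) → ℝ) :
    cubeE n (fun x => f x - g x) = cubeE n f - cubeE n g := by
  unfold cubeE; rw [Finset.sum_sub_distrib]; ring

lemma cubeE_const_mul (n : ℕ) (c : ℝ) (f : (Fin n → Bool) → ℝ) :
    cubeE n (fun x => c * f x) = c * cubeE n f := by
  unfold cubeE; rw [← Finset.mul_sum]; ring

lemma cubeE_nonneg {n : ℕ} {f : (Fin n → Bool) → ℝ} (h : ∀ x, 0 ≤ f x) :
    0 ≤ cubeE n f :=
  div_nonneg (Finset.sum_nonneg fun x _ => h x) (by positivity)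

lemma cubeE_mono {n : ℕ} {f g : (Fin n → Bool) → ℝ} (h : ∀ x, f x ≤ g x) :
    cubeE n f ≤ cubeE n g := by
  have := cubeE_nonneg (n := n) (f := fun x => g x - f x) (fun x => by simpa using sub_nonneg.2 (h x))
  rw [cubeE_sub] at this; linarith

lemma cubeE_one (n : ℕ) : cubeE n (fun _ => (1:ℝ)) = 1 := by
  unfold cubeE
  rw [Finset.sum_const, Finset.card_univ]
  simp [Fintype.card_fun]

lemma cubeE_CS (n : ℕ) (u v : (Fin n → Bool) → ℝ) :
    (cubeE n (fun x => u x * v x)) ^ 2 ≤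
      cubeE n (fun x => u x ^ 2) * cubeE n (fun x => v x ^ 2) := by
  unfold cubeE
  rw [div_pow, div_mul_div_comm, ← sq]
  have h := Finset.sum_mul_sq_le_sq_mul_sq Finset.univ u v
  exact div_le_div_of_nonneg_right h (by positivity)

lemma cubeE_succ (n : ℕ) (f : (Fin (n+1) → Bool) → ℝ) :
    cubeE (n+1) f = cubeE n (fun y => (f (Fin.cons true y) + f (Fin.cons false y)) / 2) := by
  unfold cubeE
  have hbij : Function.Bijective
      (fun p : Bool × (Fin n → Bool) => (Fin.cons p.1 p.2 : Fin (n+1) → Bool)) := by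
    constructor
    · rintro ⟨b, y⟩ ⟨b', y'⟩ hEq
      simp only at hEq
      have hb := congrFun hEq 0
      rw [Fin.cons_zero, Fin.cons_zero] at hb
      have hy : y = y' := funext fun i => by
        have := congrFun hEq i.succ
        rwa [Fin.cons_succ, Fin.cons_succ] at this
      simp [Prod.ext_iff, hb, hy]
    · intro x; exact ⟨(x 0, fun i => x i.succ), Fin.cons_self_tail x⟩
  have hsum : ∑ p : Bool × (Fin n → Bool), f (Fin.cons p.1 p.2)
      = ∑ x : Fin (n+1) → Bool, f x :=
    Fintype.sum_bijective _ hbij _ _ (fun p => rfl)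
  rw [← hsum, Fintype.sum_prod_type, Fintype.sum_bool, ← Finset.sum_add_distrib,
    ← Finset.sum_div, pow_succ]
  ring

def fe (n : ℕ) : Fin n ↪ Fin (n+1) := ⟨Fin.succ, Fin.succ_injective n⟩

lemma sum_powerset_map {α β M : Type*} [AddCommMonoid M] (e : α ↪ β) (s : Finset α)
    (F : Finset β → M) :
    ∑ t ∈ (s.map e).powerset, F t = ∑ T ∈ s.powerset, F (T.map e) := by
  have key : ∀ t ∈ (s.map e).powerset, (t.preimage e e.injective.injOn).map e = t := by
    intro t ht
    rw [Finset.mem_powerset] at ht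
    ext i
    simp only [Finset.mem_map, Finset.mem_preimage]
    constructor
    · rintro ⟨j, hj, rfl⟩; exact hj
    · intro hi
      obtain ⟨j, _, rfl⟩ := Finset.mem_map.1 (ht hi)
      exact ⟨j, hi, rfl⟩
  refine Finset.sum_bij' (fun t _ => t.preimage e e.injective.injOn)
    (fun T _ => T.map e) ?_ ?_ ?_ ?_ ?_
  · intro t ht
    rw [Finset.mem_powerset] at ht ⊢
    intro j hj
    rw [Finset.mem_preimage] at hj
    exact (Finset.mem_map' e).1 (ht hj)
  · intro T hT
    rw [Finset.mem_powerset] at hT ⊢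
    exact Finset.map_subset_map.2 hT
  · exact key
  · intro T _; exact Finset.preimage_map e T
  · intro t ht; exact (congrArg F (key t ht)).symm

lemma sum_finset_split {M : Type*} [AddCommMonoid M] (n : ℕ) (F : Finset (Fin (n+1)) → M) :
    ∑ S : Finset (Fin (n+1)), F S =
      (∑ T : Finset (Fin n), F (T.map (fe n))) +
        ∑ T : Finset (Fin n), F (insert 0 (T.map (fe n))) := by
  have h0 : (0 : Fin (n+1)) ∉ Finset.univ.map (fe n) := by
    simp [fe, Fin.succ_ne_zero]
  have huniv : (Finset.univ : Finset (Fin (n+1)))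
      = insert 0 (Finset.univ.map (fe n)) := by
    rw [Fin.univ_succ, Finset.cons_eq_insert]; rfl
  calc ∑ S : Finset (Fin (n+1)), F S
      = ∑ S ∈ (Finset.univ : Finset (Fin (n+1))).powerset, F S := by
        rw [Finset.powerset_univ]
    _ = ∑ S ∈ (insert (0:Fin (n+1)) (Finset.univ.map (fe n))).powerset, F S := by
        rw [← huniv]
    _ = (∑ T ∈ (Finset.univ.map (fe n)).powerset, F T) +
          ∑ T ∈ (Finset.univ.map (fe n)).powerset, F (insert 0 T) :=
        Finset.sum_powerset_insert h0 F
    _ = (∑ T : Finset (Fin n), F (T.map (fe n))) +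
          ∑ T : Finset (Fin n), F (insert 0 (T.map (fe n))) := by
        rw [sum_powerset_map, sum_powerset_map, Finset.powerset_univ]

lemma polyval_cons (n : ℕ) (a : Finset (Fin (n+1)) → ℝ) (b : Bool) (y : Fin n → Bool) :
    polyval (n+1) a (Fin.cons b y) =
      polyval n (fun T => a (T.map (fe n))) y +
        cubeSign b * polyval n (fun T => a (insert 0 (T.map (fe n)))) y := by
  unfold polyval
  refine (sum_finset_split n fun S => a S * ∏ i ∈ S, cubeSign ((Fin.cons b y : Fin (n+1) → Bool) i)).trans ?_
  simp only
  congr 1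
  · apply Finset.sum_congr rfl
    intro T _
    rw [Finset.prod_map]
    have : ∏ j ∈ T, cubeSign ((Fin.cons b y : Fin (n+1) → Bool) ((fe n) j))
        = ∏ j ∈ T, cubeSign (y j) :=
      Finset.prod_congr rfl fun j _ => by
        rw [show (fe n) j = j.succ from rfl, Fin.cons_succ]
    rw [this]
  · rw [Finset.mul_sum]
    apply Finset.sum_congr rfl
    intro T _
    have h0T : (0 : Fin (n+1)) ∉ T.map (fe n) := by simp [fe, Fin.succ_ne_zero]
    rw [Finset.prod_insert h0T, Finset.prod_map, Fin.cons_zero]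
    have : ∀ j ∈ T, cubeSign ((Fin.cons b y : Fin (n+1) → Bool) ((fe n) j)) = cubeSign (y j) := fun j _ => by
      rw [show (fe n) j = j.succ from rfl, Fin.cons_succ]
    rw [Finset.prod_congr rfl this]
    ring

lemma hyper (n : ℕ) : ∀ (d : ℕ) (a : Finset (Fin n) → ℝ),
    (∀ S : Finset (Fin n), d < S.card → a S = 0) →
    cubeE n (fun x => polyval n a x ^ 4) ≤
      9 ^ d * (cubeE n (fun x => polyval n a x ^ 2)) ^ 2 := by
  induction n with
  | zero =>
    intro d a _
    have hE : ∀ f : (Fin 0 → Bool) → ℝ, cubeE 0 f = f (fun i => i.elim0) := by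
      intro f
      unfold cubeE
      rw [Fintype.sum_unique]
      simp
      congr
    rw [hE, hE]
    have h1 : (1:ℝ) ≤ 9 ^ d := one_le_pow₀ (by norm_num)
    nlinarith [sq_nonneg ((polyval 0 a fun i => i.elim0) ^ 2)]
  | succ n ih =>
    intro d a ha
    set g : (Fin n → Bool) → ℝ := polyval n (fun T => a (T.map (fe n))) with hg
    set h : (Fin n → Bool) → ℝ := polyval n (fun T => a (insert 0 (T.map (fe n)))) with hh
    have hcons : ∀ (b : Bool) (y : Fin n → Bool),
        polyval (n+1) a (Fin.cons b y) = g y + cubeSign b * h y :=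
      fun b y => polyval_cons n a b y
    have hCS := cubeE_CS n (fun y => g y ^ 2) (fun y => h y ^ 2)
    have hG4 := ih d (fun T => a (T.map (fe n)))
      (fun T hT => ha _ (by rwa [Finset.card_map]))
    rw [← hg] at hG4
    have e1 : cubeSign true = 1 := rfl
    have e2 : cubeSign false = -1 := rfl
    have h0T : ∀ T : Finset (Fin n), (0 : Fin (n+1)) ∉ T.map (fe n) := fun T => by
      simp [fe, Fin.succ_ne_zero]
    have hcard : ∀ T : Finset (Fin n), (insert (0:Fin (n+1)) (T.map (fe n))).card = T.card + 1 :=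
      fun T => by rw [Finset.card_insert_of_notMem (h0T T), Finset.card_map]
    have hs2 : cubeE (n+1) (fun x => polyval (n+1) a x ^ 2)
        = cubeE n (fun y => g y ^ 2) + cubeE n (fun y => h y ^ 2) := by
      rw [cubeE_succ, ← cubeE_add]
      apply cubeE_congr
      intro y
      rw [hcons true y, hcons false y, e1, e2]
      ring
    have hs4 : cubeE (n+1) (fun x => polyval (n+1) a x ^ 4)
        = cubeE n (fun y => g y ^ 4) +
            (6 * cubeE n (fun y => g y ^ 2 * h y ^ 2) + cubeE n (fun y => h y ^ 4)) := by
      rw [cubeE_succ, ← cubeE_const_mul, ← cubeE_add, ← cubeE_add]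
      apply cubeE_congr
      intro y
      rw [hcons true y, hcons false y, e1, e2]
      ring
    have hCSg : cubeE n (fun y => (g y ^ 2) ^ 2) = cubeE n (fun y => g y ^ 4) :=
      cubeE_congr fun y => by ring
    have hCSh : cubeE n (fun y => (h y ^ 2) ^ 2) = cubeE n (fun y => h y ^ 4) :=
      cubeE_congr fun y => by ring
    rw [hCSg, hCSh] at hCS
    have hG2n : 0 ≤ cubeE n (fun y => g y ^ 2) := cubeE_nonneg fun y => sq_nonneg _
    have hH2n : 0 ≤ cubeE n (fun y => h y ^ 2) := cubeE_nonneg fun y => sq_nonneg _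
    have hG4n : 0 ≤ cubeE n (fun y => g y ^ 4) := cubeE_nonneg fun y => by positivity
    have hH4n : 0 ≤ cubeE n (fun y => h y ^ 4) := cubeE_nonneg fun y => by positivity
    have hEGHn : 0 ≤ cubeE n (fun y => g y ^ 2 * h y ^ 2) :=
      cubeE_nonneg fun y => mul_nonneg (sq_nonneg _) (sq_nonneg _)
    set G2 := cubeE n (fun y => g y ^ 2) with hG2d
    set H2 := cubeE n (fun y => h y ^ 2) with hH2d
    set G4 := cubeE n (fun y => g y ^ 4) with hG4d
    set H4 := cubeE n (fun y => h y ^ 4) with hH4d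
    set EGH := cubeE n (fun y => g y ^ 2 * h y ^ 2) with hEGHd
    rw [hs2, hs4]
    clear_value G2 H2 G4 H4 EGH
    clear hs2 hs4 hcons
    match d, ha, hG4 with
    | 0, ha, hG4 =>
      have ha1 : ∀ T : Finset (Fin n), a (insert 0 (T.map (fe n))) = 0 := fun T =>
        ha _ (by rw [hcard]; omega)
      have hzero : ∀ y, h y = 0 := fun y => by
        rw [hh]
        exact Finset.sum_eq_zero fun T _ => by simp only []; rw [ha1 T, zero_mul]
      have hH20 : H2 = 0 := by
        rw [hH2d]
        refine (cubeE_congr (g := fun _ => (0:ℝ)) (fun y => by rw [hzero y]; ring)).trans ?_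
        have := cubeE_const_mul n 0 (fun _ => (1:ℝ))
        simpa using this
      have hgh0 : EGH = 0 := by
        rw [hEGHd]
        refine (cubeE_congr (g := fun _ => (0:ℝ)) (fun y => by rw [hzero y]; ring)).trans ?_
        have := cubeE_const_mul n 0 (fun _ => (1:ℝ))
        simpa using this
      have hh40 : H4 = 0 := by
        rw [hH4d]
        refine (cubeE_congr (g := fun _ => (0:ℝ)) (fun y => by rw [hzero y]; ring)).trans ?_
        have := cubeE_const_mul n 0 (fun _ => (1:ℝ))
        simpa using this
      rw [hH20, hgh0, hh40]
      simpa using hG4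
    | (dd+1), ha, hG4 =>
      have hH4le := ih dd (fun T => a (insert 0 (T.map (fe n))))
        (fun T hT => ha _ (by rw [hcard]; omega))
      rw [← hh, ← hH2d, ← hH4d] at hH4le
      set K := (3:ℝ) ^ dd with hK
      have hKn : 0 ≤ K := by positivity
      have h9 : (9:ℝ) ^ dd = K ^ 2 := by
        rw [hK, show (9:ℝ) = 3 ^ 2 by norm_num, ← pow_mul, mul_comm, pow_mul]
      have h9' : (9:ℝ) ^ (dd+1) = 9 * K ^ 2 := by rw [pow_succ, h9]; ring
      clear_value K
      rw [h9] at hH4le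
      rw [h9'] at hG4 ⊢
      have hEGHle : EGH ≤ 3 * K ^ 2 * G2 * H2 := by
        have hsq : EGH ^ 2 ≤ (3 * K ^ 2 * G2 * H2) ^ 2 := by
          calc EGH ^ 2 ≤ G4 * H4 := hCS
            _ ≤ (9 * K ^ 2 * G2 ^ 2) * (K ^ 2 * H2 ^ 2) :=
                mul_le_mul hG4 hH4le hH4n (by nlinarith [sq_nonneg K, sq_nonneg G2, mul_nonneg (mul_nonneg (sq_nonneg K) hG2n) hG2n])
            _ = (3 * K ^ 2 * G2 * H2) ^ 2 := by ring
        nlinarith [hEGHn, hKn, hG2n, hH2n,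
          mul_nonneg (mul_nonneg (mul_nonneg (by norm_num : (0:ℝ) ≤ 3) (sq_nonneg K)) hG2n) hH2n]
      nlinarith [mul_nonneg (mul_nonneg (sq_nonneg K) hG2n) hH2n,
        mul_nonneg (sq_nonneg K) (mul_nonneg hH2n hH2n)]

end PPLB

set_option maxHeartbeats 1600000 in
/-- For a degree-`d` polynomial with `E P(X) = 0`, one has `σ₊ ≥ C^{-d} σ`. -/
theorem positive_part_lower_bound :
    ∃ C : ℝ, 0 < C ∧
      ∀ (n d : ℕ), 1 ≤ n → 1 ≤ d →
        ∀ P : (Fin n → Bool) → ℝ, IsPolyDeg n d P →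
          cubeE n P = 0 →
            C ^ (-(d : ℤ)) * Real.sqrt (cubeE n fun x => (P x) ^ 2) ≤
              Real.sqrt (cubeE n fun x => (max (P x) 0) ^ 2) := by
  classical
  refine ⟨9, by norm_num, ?_⟩
  intro n d hn hd P hPoly hmean
  obtain ⟨a, ha, hPa⟩ := hPoly
  set B := cubeE n (fun x => max (P x) 0 ^ 2) with hBd
  set A := cubeE n (fun x => max (-P x) 0 ^ 2) with hAd
  have hB0 : 0 ≤ B := by rw [hBd]; exact PPLB.cubeE_nonneg fun x => sq_nonneg _
  have hA0 : 0 ≤ A := by rw [hAd]; exact PPLB.cubeE_nonneg fun x => sq_nonneg _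
  have hσ : cubeE n (fun x => P x ^ 2) = B + A := by
    rw [hBd, hAd, ← PPLB.cubeE_add]
    exact PPLB.cubeE_congr fun x => by
      rcases le_total 0 (P x) with hx | hx
      · rw [max_eq_left hx, max_eq_right (neg_nonpos.2 hx)]; ring
      · rw [max_eq_right hx, max_eq_left (neg_nonneg.2 hx)]; ring
  have hEm_eq : cubeE n (fun x => max (-P x) 0) = cubeE n (fun x => max (P x) 0) := by
    have hsub : cubeE n (fun x => max (P x) 0 - max (-P x) 0) = 0 := by
      have heq : cubeE n (fun x => max (P x) 0 - max (-P x) 0) = cubeE n P :=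
        PPLB.cubeE_congr fun x => by
          rcases le_total 0 (P x) with hx | hx
          · rw [max_eq_left hx, max_eq_right (neg_nonpos.2 hx)]; ring
          · rw [max_eq_right hx, max_eq_left (neg_nonneg.2 hx)]; ring
      rw [heq, hmean]
    rw [PPLB.cubeE_sub] at hsub; linarith
  have hEp2 : (cubeE n (fun x => max (P x) 0)) ^ 2 ≤ B := by
    have hcs := PPLB.cubeE_CS n (fun x => max (P x) 0) (fun _ => 1)
    have h1 : cubeE n (fun x => max (P x) 0 * 1) = cubeE n (fun x => max (P x) 0) :=
      PPLB.cubeE_congr fun x => mul_one _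
    have h2 : cubeE n (fun _ : Fin n → Bool => (1:ℝ) ^ 2) = 1 := by
      rw [show (fun _ : Fin n → Bool => (1:ℝ) ^ 2) = (fun _ => (1:ℝ)) from
        funext fun _ => one_pow 2]
      exact PPLB.cubeE_one n
    rw [h1, h2, mul_one] at hcs
    rw [hBd]; exact hcs
  set Em := cubeE n (fun x => max (-P x) 0) with hEmd
  set E3 := cubeE n (fun x => max (-P x) 0 ^ 3) with hE3d
  set E4 := cubeE n (fun x => max (-P x) 0 ^ 4) with hE4d
  have hEm0 : 0 ≤ Em := by
    rw [hEmd]; exact PPLB.cubeE_nonneg fun x => le_max_right _ _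
  have hE30 : 0 ≤ E3 := by
    rw [hE3d]; exact PPLB.cubeE_nonneg fun x => pow_nonneg (le_max_right _ _) 3
  have hE40 : 0 ≤ E4 := by
    rw [hE4d]; exact PPLB.cubeE_nonneg fun x => pow_nonneg (le_max_right _ _) 4
  have hCS1 : A ^ 2 ≤ Em * E3 := by
    have hcs := PPLB.cubeE_CS n (fun x => Real.sqrt (max (-P x) 0))
      (fun x => Real.sqrt (max (-P x) 0) * max (-P x) 0)
    have c1 : cubeE n (fun x => Real.sqrt (max (-P x) 0) *
        (Real.sqrt (max (-P x) 0) * max (-P x) 0)) = cubeE n (fun x => max (-P x) 0 ^ 2) :=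
      PPLB.cubeE_congr fun x => by
        rw [← mul_assoc, Real.mul_self_sqrt (le_max_right _ _)]; ring
    have c2 : cubeE n (fun x => Real.sqrt (max (-P x) 0) ^ 2)
        = cubeE n (fun x => max (-P x) 0) :=
      PPLB.cubeE_congr fun x => Real.sq_sqrt (le_max_right _ _)
    have c3 : cubeE n (fun x => (Real.sqrt (max (-P x) 0) * max (-P x) 0) ^ 2)
        = cubeE n (fun x => max (-P x) 0 ^ 3) :=
      PPLB.cubeE_congr fun x => by
        rw [mul_pow, Real.sq_sqrt (le_max_right _ _)]; ring
    rw [c1, c2, c3] at hcs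
    rw [hAd, hEmd, hE3d]; exact hcs
  have hCS2 : E3 ^ 2 ≤ A * E4 := by
    have hcs := PPLB.cubeE_CS n (fun x => max (-P x) 0) (fun x => max (-P x) 0 ^ 2)
    have c1 : cubeE n (fun x => max (-P x) 0 * max (-P x) 0 ^ 2)
        = cubeE n (fun x => max (-P x) 0 ^ 3) := PPLB.cubeE_congr fun x => by ring
    have c3 : cubeE n (fun x => (max (-P x) 0 ^ 2) ^ 2)
        = cubeE n (fun x => max (-P x) 0 ^ 4) := PPLB.cubeE_congr fun x => by ring
    rw [c1, c3] at hcs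
    rw [hE3d, hAd, hE4d]; exact hcs
  have hE4le : E4 ≤ 9 ^ d * (B + A) ^ 2 := by
    have hmono : E4 ≤ cubeE n (fun x => P x ^ 4) := by
      rw [hE4d]
      refine PPLB.cubeE_mono fun x => ?_
      rcases le_total 0 (P x) with hx | hx
      · rw [max_eq_right (neg_nonpos.2 hx)]
        have h04 : (0:ℝ) ≤ P x ^ 4 := by positivity
        simpa using h04
      · rw [max_eq_left (neg_nonneg.2 hx), Even.neg_pow (by decide : Even 4)]
    have h4 : cubeE n (fun x => P x ^ 4) = cubeE n (fun x => PPLB.polyval n a x ^ 4) :=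
      PPLB.cubeE_congr fun x => by rw [hPa x]; rfl
    have h2 : cubeE n (fun x => PPLB.polyval n a x ^ 2) = B + A := by
      rw [← hσ]; exact PPLB.cubeE_congr fun x => by rw [hPa x]; rfl
    have := PPLB.hyper n d a ha
    rw [h2] at this
    rw [← h4] at this
    exact hmono.trans this
  have hEm2 : Em ^ 2 ≤ B := by rw [hEm_eq]; exact hEp2
  clear_value B A Em E3 E4
  have hA4 : A ^ 4 ≤ B * (A * (9 ^ d * (B + A) ^ 2)) := by
    have h9n : (0:ℝ) ≤ 9 ^ d := by positivity
    calc A ^ 4 = (A ^ 2) ^ 2 := by ring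
      _ ≤ (Em * E3) ^ 2 := pow_le_pow_left₀ (sq_nonneg A) hCS1 2
      _ = Em ^ 2 * E3 ^ 2 := by ring
      _ ≤ B * (A * E4) := mul_le_mul hEm2 hCS2 (sq_nonneg E3) hB0
      _ ≤ B * (A * (9 ^ d * (B + A) ^ 2)) := by
          apply mul_le_mul_of_nonneg_left _ hB0
          exact mul_le_mul_of_nonneg_left hE4le hA0
  have h9d : (9:ℝ) ≤ 9 ^ d := le_self_pow₀ (by norm_num) (by omega)
  have h9n : (0:ℝ) ≤ 9 ^ d := by positivity
  have h81 : (81:ℝ) ^ d = 9 ^ d * 9 ^ d := by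
    rw [show (81:ℝ) = 9 * 9 by norm_num, mul_pow]
  have htot : B + A ≤ 81 ^ d * B := by
    rw [h81]
    rcases le_total A B with hAB | hAB
    · have h81ge : (81:ℝ) ≤ 9 ^ d * 9 ^ d := by nlinarith [h9d]
      nlinarith [h81ge, hB0, hAB]
    · rcases eq_or_lt_of_le hA0 with hA | hA
      · have hBz : B = 0 := le_antisymm (hAB.trans hA.symm.le) hB0
        rw [hBz, ← hA]; simp
      · have hsq : (B + A) ^ 2 ≤ 4 * A ^ 2 := by nlinarith [hAB, hB0]
        have hstep := mul_le_mul_of_nonneg_left hsq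
          (mul_nonneg (mul_nonneg h9n hB0) hA0)
        have hmain : A ^ 4 ≤ 4 * 9 ^ d * B * A ^ 3 := by nlinarith [hA4, hstep]
        have hcube : 0 < A ^ 3 := pow_pos hA 3
        have hAle : A ≤ 4 * 9 ^ d * B := by nlinarith [hmain, hcube]
        nlinarith [hAle, hAB, hB0, h9d, mul_nonneg h9n hB0]
  have hC9 : (9:ℝ) ^ (-(d : ℤ)) = ((9:ℝ) ^ d)⁻¹ := by
    rw [zpow_neg, zpow_natCast]
  rw [hσ, hC9, inv_mul_le_iff₀ (by positivity : (0:ℝ) < (9:ℝ) ^ d)]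
  calc Real.sqrt (B + A) ≤ Real.sqrt (81 ^ d * B) := Real.sqrt_le_sqrt htot
    _ = 9 ^ d * Real.sqrt B := by
        rw [show (81:ℝ) ^ d = ((9:ℝ) ^ d) ^ 2 by
            rw [show (81:ℝ) = 9 ^ 2 by norm_num, ← pow_mul, mul_comm, pow_mul],
          Real.sqrt_mul (sq_nonneg _), Real.sqrt_sq (by positivity)]
end

section
/- There exist universal constants C, C_1 > 0 such that the following holds. Let n ≥ 1, d ≥ 1, let P be a polynomial of degree at most d on {-1,1}^n with E P(X) = 0 (X uniform on {-1,1}^n), let r ≥ C·d, and let a_r be an e^{-r}-quantile of P(X). Then (E|P(X)|^2)^{1/2} ≤ C_1^d · a_r. -/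
set_option maxHeartbeats 1000000
open Finset


open Classical

noncomputable def evalPoly (n : ℕ) (a : Finset (Fin n) → ℝ) (x : Fin n → Bool) : ℝ :=
  ∑ S : Finset (Fin n), a S * ∏ i ∈ S, cubeSign (x i)

noncomputable def finsetSuccEquiv (n : ℕ) : Finset (Fin n) × Bool ≃ Finset (Fin (n+1)) where
  toFun p := if p.2 then insert 0 (p.1.image Fin.succ) else p.1.image Fin.succ
  invFun S := (Finset.univ.filter (fun j => Fin.succ j ∈ S), 0 ∈ S)
  left_inv := by
    rintro ⟨T, b⟩
    cases b <;> simp [Fin.succ_ne_zero, Fin.succ_inj, Finset.filter_univ_mem]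
  right_inv := by
    intro S
    by_cases h : (0 : Fin (n+1)) ∈ S <;>
      · simp only [h, if_true, if_false]
        ext i
        induction i using Fin.cases <;>
          simp [Fin.succ_ne_zero, Fin.succ_inj, h]

lemma evalPoly_cons (n : ℕ) (a : Finset (Fin (n+1)) → ℝ) (b : Bool) (y : Fin n → Bool) :
    evalPoly (n+1) a (Fin.cons b y : Fin (n+1) → Bool) =
      evalPoly n (fun T => a (T.image Fin.succ)) y
        + cubeSign b * evalPoly n (fun T => a (insert 0 (T.image Fin.succ))) y := by
  have key : ∀ T : Finset (Fin n),
      (∏ i ∈ T.image Fin.succ, cubeSign ((Fin.cons b y : Fin (n+1) → Bool) i)) = ∏ j ∈ T, cubeSign (y j) := by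
    intro T
    rw [Finset.prod_image (fun x _ y _ h => Fin.succ_injective n h)]
    simp
  have h0 : ∀ T : Finset (Fin n), (0 : Fin (n+1)) ∉ T.image Fin.succ := by
    simp [Fin.succ_ne_zero]
  rw [evalPoly, ← (finsetSuccEquiv n).sum_comp
    (fun S => a S * ∏ i ∈ S, cubeSign ((Fin.cons b y : Fin (n+1) → Bool) i))]
  rw [Fintype.sum_prod_type]
  have main : ∀ T : Finset (Fin n),
      (∑ c : Bool, a (finsetSuccEquiv n (T, c)) *
        ∏ i ∈ (finsetSuccEquiv n (T, c) : Finset (Fin (n+1))),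
          cubeSign ((Fin.cons b y : Fin (n+1) → Bool) i))
      = a (T.image Fin.succ) * ∏ j ∈ T, cubeSign (y j)
        + cubeSign b * (a (insert 0 (T.image Fin.succ)) * ∏ j ∈ T, cubeSign (y j)) := by
    intro T
    rw [Fintype.sum_bool]
    simp only [finsetSuccEquiv, Equiv.coe_fn_mk, Bool.false_eq_true, if_true, if_false]
    rw [Finset.prod_insert (h0 T), key T, Fin.cons_zero]
    ring
  rw [Finset.sum_congr rfl (fun T _ => main T), Finset.sum_add_distrib]
  rw [evalPoly, evalPoly, Finset.mul_sum]

lemma sum_cube_succ (n : ℕ) (g : (Fin (n+1) → Bool) → ℝ) :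
    ∑ x : Fin (n+1) → Bool, g x
      = ∑ y : Fin n → Bool,
          (g (Fin.cons true y : Fin (n+1) → Bool) + g (Fin.cons false y : Fin (n+1) → Bool)) := by
  rw [← (Fin.consEquiv (fun _ => Bool)).sum_comp g, Fintype.sum_prod_type, Fintype.sum_bool,
    ← Finset.sum_add_distrib]
  rfl

lemma sq_le_of_sq_le_sq {u v : ℝ} (hu : 0 ≤ u) (hv : 0 ≤ v) (h : u^2 ≤ v^2) : u ≤ v := by
  nlinarith

lemma hyper : ∀ (n : ℕ) (d : ℕ) (a : Finset (Fin n) → ℝ),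
    (∀ S, d < S.card → a S = 0) →
    (2:ℝ)^n * ∑ x : Fin n → Bool, (evalPoly n a x)^4
      ≤ (3^d * ∑ x : Fin n → Bool, (evalPoly n a x)^2)^2 := by
  intro n
  induction n with
  | zero =>
    intro d a ha
    rw [Fintype.sum_subsingleton _ (fun _ => false), Fintype.sum_subsingleton _ (fun _ => false)]
    have h1 : (1:ℝ) ≤ (3^d)^2 := one_le_pow₀ (one_le_pow₀ (by norm_num))
    set f := evalPoly 0 a (fun _ => false)
    have hf : f^4 = (f^2)^2 := by ring
    simp only [pow_zero, one_mul, hf, mul_pow]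
    nlinarith [sq_nonneg (f^2)]
  | succ n ih =>
    intro d a ha
    set Q := evalPoly n (fun T => a (T.image Fin.succ)) with hQdef
    set R := evalPoly n (fun T => a (insert 0 (T.image Fin.succ))) with hRdef
    have hcons : ∀ (b : Bool) (y : Fin n → Bool),
        evalPoly (n+1) a (Fin.cons b y : Fin (n+1) → Bool) = Q y + cubeSign b * R y :=
      fun b y => evalPoly_cons n a b y
    set sq2 := ∑ y : Fin n → Bool, (Q y)^2 with hsq2
    set sq4 := ∑ y : Fin n → Bool, (Q y)^4 with hsq4
    set sr2 := ∑ y : Fin n → Bool, (R y)^2 with hsr2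
    set sr4 := ∑ y : Fin n → Bool, (R y)^4 with hsr4
    set sc := ∑ y : Fin n → Bool, (Q y)^2 * (R y)^2 with hsc
    have e4 : ∑ x : Fin (n+1) → Bool, (evalPoly (n+1) a x)^4
        = 2*sq4 + 12*sc + 2*sr4 := by
      rw [sum_cube_succ]
      have : ∀ y : Fin n → Bool,
          (evalPoly (n+1) a (Fin.cons true y : Fin (n+1) → Bool))^4
            + (evalPoly (n+1) a (Fin.cons false y : Fin (n+1) → Bool))^4
          = 2*(Q y)^4 + 12*((Q y)^2*(R y)^2) + 2*(R y)^4 := by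
        intro y; rw [hcons, hcons]; simp [cubeSign]; ring
      rw [Finset.sum_congr rfl (fun y _ => this y), Finset.sum_add_distrib,
        Finset.sum_add_distrib, ← Finset.mul_sum, ← Finset.mul_sum, ← Finset.mul_sum,
        ← hsq4, ← hsc, ← hsr4]
    have e2 : ∑ x : Fin (n+1) → Bool, (evalPoly (n+1) a x)^2
        = 2*sq2 + 2*sr2 := by
      rw [sum_cube_succ]
      have : ∀ y : Fin n → Bool,
          (evalPoly (n+1) a (Fin.cons true y : Fin (n+1) → Bool))^2
            + (evalPoly (n+1) a (Fin.cons false y : Fin (n+1) → Bool))^2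
          = 2*(Q y)^2 + 2*(R y)^2 := by
        intro y; rw [hcons, hcons]; simp [cubeSign]; ring
      rw [Finset.sum_congr rfl (fun y _ => this y), Finset.sum_add_distrib,
        ← Finset.mul_sum, ← Finset.mul_sum, ← hsq2, ← hsr2]
    have hQ : (2:ℝ)^n * sq4 ≤ (3^d * sq2)^2 := by
      apply ih d
      intro T hT
      apply ha
      rwa [Finset.card_image_of_injective _ (Fin.succ_injective n)]
    have hR : 9 * ((2:ℝ)^n * sr4) ≤ (3^d * sr2)^2 := by
      cases d with
      | zero =>
        have hz : ∀ y, R y = 0 := by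
          intro y
          rw [hRdef, evalPoly]
          apply Finset.sum_eq_zero
          intro T _
          rw [ha _ (Finset.card_pos.mpr ⟨0, Finset.mem_insert_self _ _⟩), zero_mul]
        have : sr4 = 0 := by rw [hsr4]; apply Finset.sum_eq_zero; intro y _; rw [hz y]; ring
        rw [this, mul_zero, mul_zero]
        positivity
      | succ m =>
        have h := ih m (fun T => a (insert 0 (T.image Fin.succ))) ?_
        · calc 9 * ((2:ℝ)^n * sr4) ≤ 9 * (3^m * sr2)^2 := by linarith
            _ = (3^(m+1) * sr2)^2 := by ring
        · intro T hT
          apply ha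
          have h0 : (0 : Fin (n+1)) ∉ T.image Fin.succ := by simp [Fin.succ_ne_zero]
          rw [Finset.card_insert_of_notMem h0,
            Finset.card_image_of_injective _ (Fin.succ_injective n)]
          omega
    have hC : sc^2 ≤ sq4 * sr4 := by
      have := Finset.sum_mul_sq_le_sq_mul_sq Finset.univ (fun y => (Q y)^2) (fun y => (R y)^2)
      calc sc^2 = (∑ y : Fin n → Bool, (Q y)^2 * (R y)^2)^2 := by rw [hsc]
        _ ≤ (∑ y : Fin n → Bool, ((Q y)^2)^2) * ∑ y : Fin n → Bool, ((R y)^2)^2 := this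
        _ = sq4 * sr4 := by rw [hsq4, hsr4]; congr 1 <;> (apply Finset.sum_congr rfl; intros; ring)
    have hsq2nn : 0 ≤ sq2 := Finset.sum_nonneg fun y _ => sq_nonneg _
    have hsr2nn : 0 ≤ sr2 := Finset.sum_nonneg fun y _ => sq_nonneg _
    have hsq4nn : 0 ≤ sq4 := Finset.sum_nonneg fun y _ => by positivity
    have hsr4nn : 0 ≤ sr4 := Finset.sum_nonneg fun y _ => by positivity
    have hscnn : 0 ≤ sc := Finset.sum_nonneg fun y _ => by positivity
    have hpn : (0:ℝ) < 2^n := by positivity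
    have h3d : (0:ℝ) < 3^d := by positivity
    have hmix : 3 * ((2:ℝ)^n * sc) ≤ (3^d * sq2) * (3^d * sr2) := by
      apply sq_le_of_sq_le_sq (mul_nonneg (by norm_num) (mul_nonneg hpn.le hscnn))
        (mul_nonneg (mul_nonneg h3d.le hsq2nn) (mul_nonneg h3d.le hsr2nn))
      calc (3 * ((2:ℝ)^n * sc))^2 = ((2:ℝ)^n * sq4) * (9 * ((2:ℝ)^n * sr4))
            - (2^n)^2 * 9 * (sq4 * sr4 - sc^2) := by ring
        _ ≤ ((2:ℝ)^n * sq4) * (9 * ((2:ℝ)^n * sr4)) := by nlinarith [hC, sq_nonneg ((2:ℝ)^n)]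
        _ ≤ (3^d * sq2)^2 * (3^d * sr2)^2 := by
            exact mul_le_mul hQ hR (mul_nonneg (by norm_num) (mul_nonneg hpn.le hsr4nn))
              (sq_nonneg _)
        _ = ((3^d * sq2) * (3^d * sr2))^2 := by ring
    rw [e4, e2]
    have hexp : (2:ℝ)^(n+1) = 2 * 2^n := by ring
    rw [hexp]
    nlinarith [hQ, hR, hmix, mul_nonneg hsq2nn hsr2nn, sq_nonneg ((3:ℝ)^d*sr2), sq_nonneg ((3:ℝ)^d*sq2), h3d.le]

lemma arith_l2l1 (N s1 s2 s3 s4 T : ℝ) (hN : 0 < N) (hs1 : 0 ≤ s1) (hs2 : 0 ≤ s2)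
    (cs1 : s2^2 ≤ s1*s3) (cs2 : s3^2 ≤ s2*s4) (hf : N*s4 ≤ (T*s2)^2) :
    N*s2 ≤ T^2*s1^2 := by
  rcases eq_or_lt_of_le hs2 with h|h
  · rw [← h, mul_zero]; positivity
  · have a1 : s2^2*s2^2 ≤ (s1*s3)*(s1*s3) := mul_self_le_mul_self (sq_nonneg s2) cs1
    have h1 : s2^4 ≤ s1^2*(s2*s4) := by
      have a3 : s1^2*s3^2 ≤ s1^2*(s2*s4) := mul_le_mul_of_nonneg_left cs2 (sq_nonneg s1)
      nlinarith
    have h2 : (N*s2)*s2^3 ≤ (T^2*s1^2)*s2^3 := by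
      have b1 : N*s2^4 ≤ N*(s1^2*(s2*s4)) := mul_le_mul_of_nonneg_left h1 hN.le
      have b2 : (s1^2*s2)*(N*s4) ≤ (s1^2*s2)*(T*s2)^2 :=
        mul_le_mul_of_nonneg_left hf (by positivity)
      calc (N*s2)*s2^3 = N*s2^4 := by ring
        _ ≤ N*(s1^2*(s2*s4)) := b1
        _ = (s1^2*s2)*(N*s4) := by ring
        _ ≤ (s1^2*s2)*(T*s2)^2 := b2
        _ = (T^2*s1^2)*s2^3 := by ring
    exact le_of_mul_le_mul_right h2 (by positivity)

lemma cube_l2_l1 (n : ℕ) (T : ℝ) (f : (Fin n → Bool) → ℝ)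
    (hf : (2:ℝ)^n * ∑ x : Fin n → Bool, f x^4 ≤ (T * ∑ x : Fin n → Bool, f x^2)^2) :
    (2:ℝ)^n * ∑ x : Fin n → Bool, f x^2 ≤ T^2 * (∑ x : Fin n → Bool, |f x|)^2 := by
  apply arith_l2l1 _ _ _ (∑ x : Fin n → Bool, |f x| * f x^2) (∑ x : Fin n → Bool, f x^4) T
    (by positivity) (Finset.sum_nonneg fun x _ => abs_nonneg _)
    (Finset.sum_nonneg fun x _ => sq_nonneg _) ?_ ?_ hf
  · have key := Finset.sum_mul_sq_le_sq_mul_sq Finset.univ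
      (fun x : Fin n → Bool => Real.sqrt |f x|) (fun x => Real.sqrt |f x| * |f x|)
    have e1 : ∀ x : Fin n → Bool,
        Real.sqrt |f x| * (Real.sqrt |f x| * |f x|) = f x^2 := by
      intro x
      rw [← mul_assoc, Real.mul_self_sqrt (abs_nonneg _), ← sq_abs]
      ring
    have e2 : ∀ x : Fin n → Bool, (Real.sqrt |f x|)^2 = |f x| := fun x =>
      Real.sq_sqrt (abs_nonneg _)
    have e3 : ∀ x : Fin n → Bool, (Real.sqrt |f x| * |f x|)^2 = |f x| * f x^2 := by
      intro x
      rw [mul_pow, Real.sq_sqrt (abs_nonneg _), sq_abs]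
    rw [Finset.sum_congr rfl (fun x _ => e1 x), Finset.sum_congr rfl (fun x _ => e2 x),
      Finset.sum_congr rfl (fun x _ => e3 x)] at key
    exact key
  · have key := Finset.sum_mul_sq_le_sq_mul_sq Finset.univ
      (fun x : Fin n → Bool => |f x|) (fun x => f x^2)
    have e2 : ∀ x : Fin n → Bool, (|f x|)^2 = f x^2 := fun x => sq_abs _
    have e3 : ∀ x : Fin n → Bool, (f x^2)^2 = f x^4 := fun x => by ring
    rw [Finset.sum_congr rfl (fun x _ => e2 x), Finset.sum_congr rfl (fun x _ => e3 x)] at key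
    exact key

/-- For `r ≥ C d` and an `e^{-r}`-quantile `a_r` of a centered degree-`d` polynomial,
`‖P(X)‖₂ ≤ C₁^d a_r`. -/
theorem variance_quantile_bound :
    ∃ C C₁ : ℝ, 0 < C ∧ 0 < C₁ ∧
      ∀ (n d : ℕ), 1 ≤ n → 1 ≤ d →
        ∀ P : (Fin n → Bool) → ℝ, IsPolyDeg n d P →
          cubeE n P = 0 →
            ∀ r : ℝ, C * (d : ℝ) ≤ r →
              ∀ ar : ℝ, IsQuantile n P r ar →
                Real.sqrt (cubeE n fun x => (P x) ^ 2) ≤ C₁ ^ d * ar := by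
  refine ⟨6, 12, by norm_num, by norm_num, ?_⟩
  intro n d hn hd P hP hE r hr ar hq
  obtain ⟨a, ha, hPa⟩ := hP
  have hd1 : (1:ℝ) ≤ (d:ℝ) := by exact_mod_cast hd
  have hr6 : (6:ℝ) ≤ r := by nlinarith
  set N : ℝ := 2^n with hN
  have hNpos : (0:ℝ) < N := by rw [hN]; positivity
  set s1 := ∑ x : Fin n → Bool, |P x| with hs1
  set s2 := ∑ x : Fin n → Bool, P x^2 with hs2
  have hs1nn : 0 ≤ s1 := Finset.sum_nonneg fun x _ => abs_nonneg _
  have hs2nn : 0 ≤ s2 := Finset.sum_nonneg fun x _ => sq_nonneg _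
  have hsum0 : ∑ x : Fin n → Bool, P x = 0 := by
    have h := hE
    rw [cubeE, div_eq_zero_iff] at h
    rcases h with h | h
    · exact h
    · exfalso; have : (0:ℝ) < 2^n := by positivity
      linarith
  -- hypercontractive bound for P
  have hhyp : N * ∑ x : Fin n → Bool, P x^4 ≤ ((3:ℝ)^d * s2)^2 := by
    have h := hyper n d a ha
    have e4 : ∑ x : Fin n → Bool, (evalPoly n a x)^4 = ∑ x : Fin n → Bool, P x^4 :=
      Finset.sum_congr rfl fun x _ => by rw [hPa x]; rfl
    have e2 : ∑ x : Fin n → Bool, (evalPoly n a x)^2 = s2 :=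
      Finset.sum_congr rfl fun x _ => by rw [hPa x]; rfl
    rw [e4, e2] at h
    exact h
  have key : N * s2 ≤ (9:ℝ)^d * s1^2 := by
    have h := cube_l2_l1 n ((3:ℝ)^d) P hhyp
    have h9 : ((3:ℝ)^d)^2 = (9:ℝ)^d := by
      rw [← pow_mul, mul_comm, pow_mul]; norm_num
    rw [h9] at h
    exact h
  have h9pos : (0:ℝ) < (9:ℝ)^d := by positivity
  -- exp facts
  have hexp6 : (144:ℝ) < Real.exp 6 := by
    have h1 : (2.7182818283:ℝ) < Real.exp 1 := Real.exp_one_gt_d9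
    have h2 : Real.exp 6 = Real.exp 1 ^ 6 := by
      rw [show (6:ℝ) = (6:ℕ) * 1 by norm_num, Real.exp_nat_mul]
    have h3 : (2.7182818283:ℝ)^6 < Real.exp 1 ^ 6 :=
      pow_lt_pow_left₀ h1 (by norm_num) (by norm_num)
    rw [h2]
    nlinarith
  have hexppos : (0:ℝ) < Real.exp (-6) := Real.exp_pos _
  by_cases hz : s2 = 0
  · -- P ≡ 0
    have hP0 : ∀ x, P x = 0 := by
      intro x
      have := (Finset.sum_eq_zero_iff_of_nonneg (fun x _ => sq_nonneg (P x))).mp hz x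
        (Finset.mem_univ x)
      exact pow_eq_zero_iff (by norm_num) |>.mp this
    have hEzero : cubeE n (fun x => P x ^ 2) = 0 := by
      rw [cubeE]
      simp [hP0]
    rw [hEzero, Real.sqrt_zero]
    have har : 0 ≤ ar := by
      by_contra h
      push_neg at h
      have hpr : cubePr n {x | P x ≤ ar} = 0 := by
        rw [cubePr]
        have : ∀ x : Fin n → Bool, (if x ∈ {x | P x ≤ ar} then (1:ℝ) else 0) = 0 := by
          intro x
          rw [if_neg]
          simp only [Set.mem_setOf_eq, hP0 x, not_le]
          exact h
        rw [Finset.sum_congr rfl fun x _ => this x]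
        simp
      have h2 := hq.2
      rw [hpr] at h2
      have : (1:ℝ) ≤ Real.exp (-r) := by linarith
      have := Real.one_le_exp_iff.mp this
      linarith
    positivity
  · have hs2pos : 0 < s2 := lt_of_le_of_ne hs2nn (Ne.symm hz)
    have hs1pos : 0 < s1 := by
      rcases eq_or_lt_of_le hs1nn with h | h
      · exfalso
        rw [← h] at key
        nlinarith
      · exact h
    set t := s1 / (4*N) with ht
    have htpos : 0 < t := by rw [ht]; positivity
    set K := Finset.univ.filter (fun x : Fin n → Bool => t ≤ P x) with hK
    set k : ℝ := (K.card : ℝ) with hk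
    have hknn : 0 ≤ k := by positivity
    -- anticoncentration: s1^2 ≤ 16 * (s2 * k)
    have hmax : ∑ x : Fin n → Bool, max (P x) 0 = s1/2 := by
      have e : ∀ x : Fin n → Bool, max (P x) 0 = (P x + |P x|)/2 := by
        intro x
        rcases le_or_gt 0 (P x) with h | h
        · rw [max_eq_left h, abs_of_nonneg h]; ring
        · rw [max_eq_right h.le, abs_of_neg h]; ring
      rw [Finset.sum_congr rfl fun x _ => e x, ← Finset.sum_div, Finset.sum_add_distrib,
        hsum0, zero_add]
    have hKs : ∑ x ∈ K, |P x| ≤ Real.sqrt (s2 * k) := by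
      have cs := Finset.sum_mul_sq_le_sq_mul_sq K (fun x => |P x|) (fun _ => (1:ℝ))
      simp only [mul_one, one_pow, sq_abs] at cs
      have hsub : ∑ x ∈ K, P x^2 ≤ s2 :=
        Finset.sum_le_sum_of_subset_of_nonneg (Finset.subset_univ K)
          (fun x _ _ => sq_nonneg _)
      have hcard : ∑ _x ∈ K, (1:ℝ) = k := by simp [hk]
      rw [hcard] at cs
      have h1 : (∑ x ∈ K, |P x|)^2 ≤ s2 * k :=
        le_trans cs (mul_le_mul_of_nonneg_right hsub hknn)
      have h2 : 0 ≤ ∑ x ∈ K, |P x| := Finset.sum_nonneg fun x _ => abs_nonneg _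
      calc ∑ x ∈ K, |P x| = Real.sqrt ((∑ x ∈ K, |P x|)^2) := (Real.sqrt_sq h2).symm
        _ ≤ Real.sqrt (s2 * k) := Real.sqrt_le_sqrt h1
    have hsplit : s1/4 ≤ Real.sqrt (s2 * k) := by
      have hdecomp := Finset.sum_filter_add_sum_filter_not Finset.univ
        (fun x : Fin n → Bool => t ≤ P x) (fun x => max (P x) 0)
      have hKmax : ∑ x ∈ K, max (P x) 0 ≤ ∑ x ∈ K, |P x| :=
        Finset.sum_le_sum fun x _ => max_le (le_abs_self _) (abs_nonneg _)
      have hNotmax : ∑ x ∈ Finset.univ.filter (fun x : Fin n → Bool => ¬ t ≤ P x), max (P x) 0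
          ≤ s1/4 := by
        have step : ∑ x ∈ Finset.univ.filter (fun x : Fin n → Bool => ¬ t ≤ P x), max (P x) 0
            ≤ ∑ _x ∈ Finset.univ.filter (fun x : Fin n → Bool => ¬ t ≤ P x), t := by
          apply Finset.sum_le_sum
          intro x hx
          rw [Finset.mem_filter] at hx
          exact max_le (le_of_not_ge hx.2) htpos.le
        have hcard2 : ((Finset.univ.filter (fun x : Fin n → Bool => ¬ t ≤ P x)).card : ℝ)
            ≤ N := by
          rw [hN]
          have := Finset.card_filter_le Finset.univ (fun x : Fin n → Bool => ¬ t ≤ P x)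
          calc ((Finset.univ.filter (fun x : Fin n → Bool => ¬ t ≤ P x)).card : ℝ)
              ≤ (Finset.univ.card : ℝ) := by exact_mod_cast this
            _ = 2^n := by rw [Finset.card_univ]; simp
        calc ∑ x ∈ Finset.univ.filter (fun x : Fin n → Bool => ¬ t ≤ P x), max (P x) 0
            ≤ ∑ _x ∈ Finset.univ.filter (fun x : Fin n → Bool => ¬ t ≤ P x), t := step
          _ = ((Finset.univ.filter (fun x : Fin n → Bool => ¬ t ≤ P x)).card : ℝ) * t := by
              rw [Finset.sum_const, nsmul_eq_mul]
          _ ≤ N * t := mul_le_mul_of_nonneg_right hcard2 htpos.le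
          _ = s1/4 := by rw [ht]; field_simp
      have : s1/2 ≤ ∑ x ∈ K, |P x| + s1/4 := by
        rw [← hmax, ← hdecomp]
        exact add_le_add hKmax hNotmax
      linarith [hKs]
    have hanti : s1^2 ≤ 16 * (s2 * k) := by
      have h1 : (s1/4)^2 ≤ (Real.sqrt (s2*k))^2 :=
        pow_le_pow_left₀ (by positivity) hsplit 2
      rw [Real.sq_sqrt (by positivity)] at h1
      nlinarith
    have hkN : N ≤ 16 * 9^d * k := by
      have h1 : N * s2 ≤ (16 * 9^d * k) * s2 := by
        calc N * s2 ≤ 9^d * s1^2 := key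
          _ ≤ 9^d * (16 * (s2 * k)) := mul_le_mul_of_nonneg_left hanti h9pos.le
          _ = (16 * 9^d * k) * s2 := by ring
      exact le_of_mul_le_mul_right h1 hs2pos
    -- the quantile must be at least t
    have htar : t ≤ ar := by
      by_contra h
      push_neg at h
      -- then k ≤ e^{-r} N
      have hub : ∑ x : Fin n → Bool, (if x ∈ {x | P x ≤ ar} then (1:ℝ) else 0) ≤ N - k := by
        have step1 : ∀ x : Fin n → Bool,
            (if x ∈ {x | P x ≤ ar} then (1:ℝ) else 0) ≤ (if t ≤ P x then 0 else 1) := by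
          intro x
          by_cases hx : t ≤ P x
          · have hxx : x ∉ {x | P x ≤ ar} := by
              simp only [Set.mem_setOf_eq, not_le]
              linarith
            simp [hxx, hx]
          · simp only [if_neg hx]
            split <;> norm_num
        have step2 : ∑ x : Fin n → Bool, (if t ≤ P x then (0:ℝ) else 1)
            = N - k := by
          have e : ∀ x : Fin n → Bool, (if t ≤ P x then (0:ℝ) else 1)
              = (if ¬ t ≤ P x then (1:ℝ) else 0) := by
            intro x; by_cases hx : t ≤ P x <;> simp [hx]
          rw [Finset.sum_congr rfl fun x _ => e x, Finset.sum_boole]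
          have hcc := Finset.card_filter_add_card_filter_not
            (s := (Finset.univ : Finset (Fin n → Bool))) (fun x : Fin n → Bool => t ≤ P x)
          have hcu : ((Finset.univ : Finset (Fin n → Bool)).card : ℝ) = N := by
            rw [hN, Finset.card_univ]; simp
          have : (K.card : ℝ) + ((Finset.univ.filter (fun x : Fin n → Bool => ¬ t ≤ P x)).card : ℝ)
              = N := by
            rw [← hcu]
            exact_mod_cast hcc
          rw [← hk] at this
          linarith
        calc ∑ x : Fin n → Bool, (if x ∈ {x | P x ≤ ar} then (1:ℝ) else 0)
            ≤ ∑ x : Fin n → Bool, (if t ≤ P x then (0:ℝ) else 1) :=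
              Finset.sum_le_sum fun x _ => step1 x
          _ = N - k := step2
      have hprle : cubePr n {x | P x ≤ ar} ≤ (N - k)/N := by
        rw [cubePr, ← hN]
        gcongr
      have h2 : (1 - Real.exp (-r)) * N ≤ N - k := by
        have := le_trans hq.2 hprle
        rwa [le_div_iff₀ hNpos] at this
      have hrk : k ≤ Real.exp (-r) * N := by nlinarith
      have hexpr : Real.exp (-r) ≤ Real.exp (-6) ^ d := by
        have h3 : Real.exp (-r) ≤ Real.exp ((d:ℝ) * (-6)) := by
          apply Real.exp_le_exp.mpr
          nlinarith
        rwa [Real.exp_nat_mul] at h3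
      have hcomb : N ≤ 16 * (9 * Real.exp (-6))^d * N := by
        calc N ≤ 16 * 9^d * k := hkN
          _ ≤ 16 * 9^d * (Real.exp (-r) * N) :=
              mul_le_mul_of_nonneg_left hrk (by positivity)
          _ ≤ 16 * 9^d * (Real.exp (-6)^d * N) :=
              mul_le_mul_of_nonneg_left
                (mul_le_mul_of_nonneg_right hexpr hNpos.le) (by positivity)
          _ = 16 * (9 * Real.exp (-6))^d * N := by rw [mul_pow]; ring
      have h1le : (1:ℝ) ≤ 16 * (9 * Real.exp (-6))^d := by
        have h4 : (1:ℝ) * N ≤ (16 * (9 * Real.exp (-6))^d) * N := by linarith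
        exact le_of_mul_le_mul_right h4 hNpos
      have hb1 : 9 * Real.exp (-6) ≤ 1 := by
        rw [Real.exp_neg, ← div_eq_mul_inv, div_le_one (Real.exp_pos 6)]
        linarith
      have hb0 : (0:ℝ) ≤ 9 * Real.exp (-6) := by positivity
      have hpow : (9 * Real.exp (-6))^d ≤ 9 * Real.exp (-6) :=
        pow_le_of_le_one hb0 hb1 (by omega)
      have hfin : (1:ℝ) ≤ 144 * Real.exp (-6) := by nlinarith
      rw [Real.exp_neg] at hfin
      have hcancel : Real.exp 6 * (Real.exp 6)⁻¹ = 1 :=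
        mul_inv_cancel₀ (ne_of_gt (Real.exp_pos 6))
      have hle144 : Real.exp 6 ≤ 144 := by nlinarith [Real.exp_pos 6]
      linarith
    -- conclusion
    have har0 : 0 < ar := lt_of_lt_of_le htpos htar
    have hs1le : s1 ≤ 4*N*ar := by
      rw [ht, div_le_iff₀ (by positivity)] at htar
      linarith
    have hs2le : s2 ≤ 16*9^d*N*ar^2 := by
      have h1 : s1^2 ≤ (4*N*ar)^2 := pow_le_pow_left₀ hs1nn hs1le 2
      have h3 : N*s2 ≤ N*(16*9^d*N*ar^2) := by
        calc N*s2 ≤ 9^d*s1^2 := key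
          _ ≤ 9^d*(4*N*ar)^2 := mul_le_mul_of_nonneg_left h1 h9pos.le
          _ = N*(16*9^d*N*ar^2) := by ring
      exact le_of_mul_le_mul_left h3 hNpos
    have h16 : (16:ℝ)*9^d ≤ 144^d := by
      have h144 : (144:ℝ)^d = 16^d * 9^d := by rw [← mul_pow]; norm_num
      rw [h144]
      exact mul_le_mul_of_nonneg_right (le_self_pow₀ (by norm_num) (by omega)) (by positivity)
    have hfinal : cubeE n (fun x => P x^2) ≤ (12^d*ar)^2 := by
      rw [cubeE, ← hN, div_le_iff₀ hNpos]
      have h12 : ((12:ℝ)^d*ar)^2 = 144^d*ar^2 := by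
        rw [mul_pow, ← pow_mul, mul_comm d 2, pow_mul]
        norm_num
      rw [h12]
      calc (∑ x : Fin n → Bool, P x ^2) = s2 := hs2.symm
        _ ≤ 16*9^d*N*ar^2 := hs2le
        _ ≤ 144^d*ar^2*N := by nlinarith [mul_nonneg hNpos.le (sq_nonneg ar)]
    calc Real.sqrt (cubeE n fun x => P x^2) ≤ Real.sqrt ((12^d*ar)^2) :=
        Real.sqrt_le_sqrt hfinal
      _ = 12^d*ar := Real.sqrt_sq (by positivity)
end
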